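/- arXiv:1612.07619 — 7 statements merged into one kernel-verified Lean document; each statement's English description precedes it below -/
import Mathlib

section
/- For n = 2m even, the eigenvalues of the matrix (1/2)·H_n(1,1) are 0 and ±√(k(k+1)) for k = 1,...,m. -/
/-- The `(n+1) × (n+1)` matrix `H_n(a,b)`: tridiagonal with zero diagonal,
superdiagonal entries `h_{k,k+1} = k` (`k` even) or `k + a` (`k` odd), and
subdiagonal entries `h_{n+2-k,n+1-k} = k` (`k` even) or `k + b` (`k` odd),
for `k = 1, ..., n` (1-based indexing). -/
def Hmat (n : ℕ) (a b : ℝ) : Matrix (Fin (n + 1)) (Fin (n + 1)) ℝ :=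
  Matrix.of fun i j =>
    if (i : ℕ) + 1 = (j : ℕ) then
      (if ((i : ℕ) + 1) % 2 = 0 then ((i : ℕ) + 1 : ℝ) else ((i : ℕ) + 1 : ℝ) + a)
    else if (j : ℕ) + 1 = (i : ℕ) then
      (if (n - (j : ℕ)) % 2 = 0 then ((n - (j : ℕ) : ℕ) : ℝ)
       else ((n - (j : ℕ) : ℕ) : ℝ) + b)
    else 0

lemma Aentry (m : ℕ) (i j : Fin (2*m+1)) :
    ((1/2 : ℝ) • Hmat (2*m) 1 1) i j =
      if (i : ℕ) + 1 = (j : ℕ) then (((i : ℕ)/2 + 1 : ℕ) : ℝ)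
      else if (j : ℕ) + 1 = (i : ℕ) then ((m - (j : ℕ)/2 : ℕ) : ℝ) else 0 := by
  have hi := i.isLt
  have hj := j.isLt
  simp only [Matrix.smul_apply, Hmat, Matrix.of_apply, smul_eq_mul]
  split_ifs with h1 h2 h3 h4
  · obtain ⟨t, ht⟩ : ∃ t, (i:ℕ) = 2*t+1 := ⟨(i:ℕ)/2, by omega⟩
    rw [ht]
    have h5 : (2*t+1)/2 + 1 = t+1 := by omega
    rw [h5]; push_cast; ring
  · obtain ⟨t, ht⟩ : ∃ t, (i:ℕ) = 2*t := ⟨(i:ℕ)/2, by omega⟩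
    rw [ht]
    have h5 : (2*t)/2 + 1 = t+1 := by omega
    rw [h5]; push_cast; ring
  · obtain ⟨t, ht⟩ : ∃ t, (j:ℕ) = 2*t := ⟨(j:ℕ)/2, by omega⟩
    have hb : 2*m - (j:ℕ) = 2*(m-t) := by omega
    have hb2 : m - (j:ℕ)/2 = m - t := by omega
    rw [hb, hb2]; push_cast [Nat.cast_sub (by omega : t ≤ m)]; ring
  · obtain ⟨t, ht⟩ : ∃ t, (j:ℕ) = 2*t+1 := ⟨(j:ℕ)/2, by omega⟩
    have hb : 2*m - (j:ℕ) = 2*(m-t)-1 := by omega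
    have hb2 : m - (j:ℕ)/2 = m - t := by omega
    rw [hb, hb2]
    have h6 : ((2*(m-t)-1 : ℕ) : ℝ) = 2*((m:ℝ)-t) - 1 := by
      push_cast [Nat.cast_sub (by omega : 1 ≤ 2*(m-t)), Nat.cast_sub (by omega : t ≤ m)]; ring
    rw [h6]
    push_cast [Nat.cast_sub (by omega : t ≤ m)]; ring
  · ring


lemma sum_if_nat {N : ℕ} (c : ℕ) (C : ℝ) :
    (∑ j : Fin N, if c = (j:ℕ) then C else 0) = if c < N then C else 0 := by
  by_cases h : c < N
  · rw [if_pos h, Finset.sum_eq_single (⟨c, h⟩ : Fin N)]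
    · simp
    · intro b _ hb
      rw [if_neg]
      intro hc
      exact hb (by exact Fin.ext hc.symm)
    · simp
  · rw [if_neg h, Finset.sum_eq_zero]
    intro j _
    rw [if_neg]
    intro hc
    exact h (hc ▸ j.isLt)


lemma mulVecA (m : ℕ) (f : ℕ → ℝ) (i : Fin (2*m+1)) :
    (((1/2 : ℝ) • Hmat (2*m) 1 1).mulVec (fun j => f (j:ℕ))) i =
      (if (i:ℕ)+1 < 2*m+1 then (((i:ℕ)/2 + 1 : ℕ) : ℝ) * f ((i:ℕ)+1) else 0)
      + (if 0 < (i:ℕ) then ((m - ((i:ℕ)-1)/2 : ℕ) : ℝ) * f ((i:ℕ)-1) else 0) := by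
  have key : ∀ j : Fin (2*m+1), ((1/2:ℝ) • Hmat (2*m) 1 1) i j * f (j:ℕ)
      = (if (i:ℕ)+1 = (j:ℕ) then (((i:ℕ)/2+1:ℕ):ℝ) * f ((i:ℕ)+1) else 0)
      + (if 0 < (i:ℕ) then (if (i:ℕ)-1 = (j:ℕ) then ((m - ((i:ℕ)-1)/2 : ℕ):ℝ) * f ((i:ℕ)-1) else 0) else 0) := by
    intro j
    rw [Aentry]
    by_cases h1 : (i:ℕ)+1 = (j:ℕ)
    · rw [if_pos h1, if_pos h1]
      have h2 : ¬ ((j:ℕ)+1 = (i:ℕ)) := by omega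
      have h3 : (if 0 < (i:ℕ) then (if (i:ℕ)-1 = (j:ℕ) then ((m - ((i:ℕ)-1)/2 : ℕ):ℝ) * f ((i:ℕ)-1) else 0) else 0) = 0 := by
        split_ifs with a1 a2 <;> first | rfl | omega
      rw [h3, h1, add_zero]
    · rw [if_neg h1, if_neg h1, zero_add]
      by_cases h2 : (j:ℕ)+1 = (i:ℕ)
      · rw [if_pos h2, if_pos (by omega : 0 < (i:ℕ)), if_pos (by omega : (i:ℕ)-1 = (j:ℕ))]
        have e1 : (j:ℕ) = (i:ℕ)-1 := by omega
        rw [e1]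
      · rw [if_neg h2, zero_mul]
        split_ifs with a1 a2 <;> first | rfl | omega
  simp only [Matrix.mulVec, dotProduct]
  simp only [key]
  rw [Finset.sum_add_distrib, sum_if_nat]
  congr 1
  by_cases h0 : 0 < (i:ℕ)
  · simp only [if_pos h0]
    rw [sum_if_nat, if_pos (by omega : (i:ℕ)-1 < 2*m+1)]
  · simp only [if_neg h0, Finset.sum_const_zero]


noncomputable def cc (k : ℕ) : ℕ → ℝ
  | 0 => 1
  | (j+1) => cc k j * (((k:ℝ)*((k:ℝ)+1) - ((j:ℝ)+1)*((j:ℝ)+2)) / (((j:ℝ)+1)*((j:ℝ)+2)))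

def gg (m j s : ℕ) : ℝ := if j ≤ s then (-1:ℝ)^(s-j) * (Nat.choose (m-1-j) (s-j) : ℝ) else 0

noncomputable def ww (m k s : ℕ) : ℝ := ∑ j ∈ Finset.range m, cc k j * gg m j s

lemma cc_rec (k j : ℕ) : (((j:ℝ)+1)*((j:ℝ)+2)) * cc k (j+1)
    = ((k:ℝ)*((k:ℝ)+1) - ((j:ℝ)+1)*((j:ℝ)+2)) * cc k j := by
  have h1 : ((j:ℝ)+1) ≠ 0 := by positivity
  have h2 : ((j:ℝ)+2) ≠ 0 := by positivity
  show (((j:ℝ)+1)*((j:ℝ)+2)) * (cc k j * _) = _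
  field_simp

lemma cc_eq_zero (k : ℕ) (hk : 1 ≤ k) : ∀ j, k ≤ j → cc k j = 0 := by
  intro j
  induction j with
  | zero => omega
  | succ n ih =>
    intro h
    by_cases hn : k ≤ n
    · show cc k n * _ = 0
      rw [ih hn, zero_mul]
    · have hkn : k = n + 1 := by omega
      have hc : (k:ℝ) = (n:ℝ) + 1 := by rw [hkn]; push_cast; ring
      show cc k n * (((k:ℝ)*((k:ℝ)+1) - ((n:ℝ)+1)*((n:ℝ)+2)) / (((n:ℝ)+1)*((n:ℝ)+2))) = 0
      rw [hc]
      have h0 : (((n:ℝ)+1)*(((n:ℝ)+1)+1) - ((n:ℝ)+1)*((n:ℝ)+2)) = 0 := by ring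
      rw [h0, zero_div, mul_zero]

lemma gg_lt (m j s : ℕ) (h : s < j) : gg m j s = 0 := by rw [gg, if_neg (by omega)]

lemma gg_self (m j : ℕ) : gg m j j = 1 := by
  rw [gg, if_pos le_rfl]
  simp

lemma gg_big (m j s : ℕ) (hj : j < m) (hs : m ≤ s) : gg m j s = 0 := by
  rw [gg]
  split_ifs with h
  · rw [Nat.choose_eq_zero_of_lt (by omega)]
    simp
  · rfl

lemma ww_big (m k s : ℕ) (hs : m ≤ s) : ww m k s = 0 := by
  rw [ww]
  apply Finset.sum_eq_zero
  intro j hj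
  rw [gg_big m j s (Finset.mem_range.mp hj) hs, mul_zero]

lemma ww_zero (m k : ℕ) (hm : 0 < m) : ww m k 0 = 1 := by
  rw [ww]
  rw [Finset.sum_eq_single 0]
  · rw [gg_self]
    show cc k 0 * 1 = 1
    simp [cc]
  · intro j _ hj
    rw [gg_lt m j 0 (by omega), mul_zero]
  · intro h
    exact absurd (Finset.mem_range.mpr hm) h


lemma dagger (m j s : ℕ) (hj : j < m) (hs : s < m) :
    ((s:ℝ)+1)*((s:ℝ)+2) * gg m j (s+1) + 2*((s:ℝ)+1)*((m:ℝ)-(s:ℝ)) * gg m j s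
      + ((m:ℝ)-(s:ℝ))*((m:ℝ)-(s:ℝ)+1) * (if s = 0 then 0 else gg m j (s-1))
    = (j:ℝ)*((j:ℝ)+1) * (if j = 0 then 0 else gg m (j-1) s)
      + ((j:ℝ)+1)*((j:ℝ)+2) * gg m j s := by
  rcases lt_trichotomy (s+1) j with hc | hc | hc
  · -- everything vanishes
    rw [gg_lt m j (s+1) hc, gg_lt m j s (by omega)]
    have h3 : (if s = 0 then (0:ℝ) else gg m j (s-1)) = 0 := by
      split_ifs with h
      · rfl
      · exact gg_lt m j (s-1) (by omega)
    have h4 : (if j = 0 then (0:ℝ) else gg m (j-1) s) = 0 := by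
      split_ifs with h
      · rfl
      · exact gg_lt m (j-1) s (by omega)
    rw [h3, h4]; ring
  · -- s + 1 = j
    rw [← hc, gg_self, gg_lt m (s+1) s (by omega)]
    have h3 : (if s = 0 then (0:ℝ) else gg m (s+1) (s-1)) = 0 := by
      split_ifs with h
      · rfl
      · exact gg_lt m (s+1) (s-1) (by omega)
    rw [h3, if_neg (by omega : ¬ s+1 = 0)]
    have h4 : s + 1 - 1 = s := by omega
    rw [h4, gg_self]
    push_cast; ring
  · -- j ≤ s
    have hjs : j ≤ s := by omega
    by_cases ht0 : s = j
    · -- t = 0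
      subst ht0
      obtain ⟨r, rfl⟩ : ∃ r, m = s + 1 + r := ⟨m - s - 1, by omega⟩
      have e1 : gg (s+1+r) s (s+1) = -(r:ℝ) := by
        rw [gg, if_pos (by omega)]
        have e2 : s + 1 - s = 1 := by omega
        have e3 : s + 1 + r - 1 - s = r := by omega
        rw [e2, e3, Nat.choose_one_right]
        ring
      rw [e1, gg_self]
      have h3 : (if s = 0 then (0:ℝ) else gg (s+1+r) s (s-1)) = 0 := by
        split_ifs with h
        · rfl
        · exact gg_lt _ s (s-1) (by omega)
      rw [h3]
      by_cases hj0 : s = 0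
      · subst hj0
        rw [if_pos rfl]
        push_cast; ring
      · rw [if_neg hj0]
        have e4 : gg (s+1+r) (s-1) s = -((r:ℝ)+1) := by
          rw [gg, if_pos (by omega)]
          have e5 : s - (s-1) = 1 := by omega
          have e6 : s + 1 + r - 1 - (s-1) = r+1 := by omega
          rw [e5, e6, Nat.choose_one_right]
          push_cast; ring
        rw [e4]
        push_cast; ring
    · -- t ≥ 1
      obtain ⟨t, rfl⟩ : ∃ t, s = j + t + 1 := ⟨s - j - 1, by omega⟩
      obtain ⟨r, rfl⟩ : ∃ r, m = j + t + 2 + r := ⟨m - j - t - 2, by omega⟩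
      have hA : gg (j+t+2+r) j (j+t+1-1) = (-1:ℝ)^t * (Nat.choose (t+1+r) t : ℝ) := by
        rw [gg, if_pos (by omega)]
        have e1 : j + t + 1 - 1 - j = t := by omega
        have e2 : j + t + 2 + r - 1 - j = t + 1 + r := by omega
        rw [e1, e2]
      have hB : gg (j+t+2+r) j (j+t+1) = (-1:ℝ)^(t+1) * (Nat.choose (t+1+r) (t+1) : ℝ) := by
        rw [gg, if_pos (by omega)]
        have e1 : j + t + 1 - j = t + 1 := by omega
        have e2 : j + t + 2 + r - 1 - j = t + 1 + r := by omega
        rw [e1, e2]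
      have hD : gg (j+t+2+r) j (j+t+1+1) = (-1:ℝ)^(t+2) * (Nat.choose (t+1+r) (t+2) : ℝ) := by
        rw [gg, if_pos (by omega)]
        have e1 : j + t + 1 + 1 - j = t + 2 := by omega
        have e2 : j + t + 2 + r - 1 - j = t + 1 + r := by omega
        rw [e1, e2]
      have hprev : (j:ℝ)*((j:ℝ)+1) * (if j = 0 then 0 else gg (j+t+2+r) (j-1) (j+t+1))
          = (j:ℝ)*((j:ℝ)+1) * ((-1:ℝ)^(t+2) * (Nat.choose (t+2+r) (t+2) : ℝ)) := by
        by_cases hj0 : j = 0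
        · subst hj0; simp
        · rw [if_neg hj0]
          congr 1
          rw [gg, if_pos (by omega)]
          have e1 : j + t + 1 - (j-1) = t + 2 := by omega
          have e2 : j + t + 2 + r - 1 - (j-1) = t + 2 + r := by omega
          rw [e1, e2]
      rw [hA, hB, hD, hprev, if_neg (by omega : ¬ j + t + 1 = 0)]
      -- binomial facts
      have h1 : (Nat.choose (t+1+r) (t+2) : ℝ) * ((t:ℝ)+2) = (Nat.choose (t+1+r) (t+1) : ℝ) * (r:ℝ) := by
        have := Nat.choose_succ_right_eq (t+1+r) (t+1)
        have e : t + 1 + r - (t+1) = r := by omega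
        rw [e] at this
        exact_mod_cast congrArg (fun x : ℕ => (x:ℝ)) this
      have h2 : (Nat.choose (t+1+r) (t+1) : ℝ) * ((t:ℝ)+1) = (Nat.choose (t+1+r) t : ℝ) * ((r:ℝ)+1) := by
        have := Nat.choose_succ_right_eq (t+1+r) t
        have e : t + 1 + r - t = r + 1 := by omega
        rw [e] at this
        exact_mod_cast congrArg (fun x : ℕ => (x:ℝ)) this
      have h3 : (Nat.choose (t+2+r) (t+2) : ℝ)
          = (Nat.choose (t+1+r) (t+1) : ℝ) + (Nat.choose (t+1+r) (t+2) : ℝ) := by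
        have h4 : (t+2+r).choose (t+2) = (t+1+r).choose (t+1) + (t+1+r).choose (t+2) := by
          rw [show t+2+r = (t+1+r)+1 by omega, show t+2 = (t+1)+1 by omega]
          exact Nat.choose_succ_succ _ _
        exact_mod_cast congrArg (fun x : ℕ => (x:ℝ)) h4
      push_cast
      linear_combination ((-1:ℝ)^t * ((t:ℝ)+2*(j:ℝ)+3)) * h1
        + (-((-1:ℝ)^t) * ((r:ℝ)+2)) * h2
        + (-((-1:ℝ)^t) * ((j:ℝ)*((j:ℝ)+1))) * h3


lemma star (m k : ℕ) (hk1 : 1 ≤ k) (hkm : k ≤ m) (s : ℕ) (hs : s < m) :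
    ((s:ℝ)+1)*((s:ℝ)+2) * ww m k (s+1) + 2*((s:ℝ)+1)*((m:ℝ)-(s:ℝ)) * ww m k s
      + ((m:ℝ)-(s:ℝ))*((m:ℝ)-(s:ℝ)+1) * (if s = 0 then 0 else ww m k (s-1))
    = (k:ℝ)*((k:ℝ)+1) * ww m k s := by
  have hif : (if s = 0 then (0:ℝ) else ww m k (s-1))
      = ∑ j ∈ Finset.range m, cc k j * (if s = 0 then 0 else gg m j (s-1)) := by
    split_ifs with h
    · simp
    · rfl
  rw [hif]
  simp only [ww]
  rw [Finset.mul_sum, Finset.mul_sum, Finset.mul_sum, Finset.mul_sum,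
    ← Finset.sum_add_distrib, ← Finset.sum_add_distrib]
  have step : ∀ j ∈ Finset.range m,
      ((s:ℝ)+1)*((s:ℝ)+2) * (cc k j * gg m j (s+1)) + 2*((s:ℝ)+1)*((m:ℝ)-(s:ℝ)) * (cc k j * gg m j s)
        + ((m:ℝ)-(s:ℝ))*((m:ℝ)-(s:ℝ)+1) * (cc k j * (if s = 0 then 0 else gg m j (s-1)))
      = cc k j * ((j:ℝ)*((j:ℝ)+1) * (if j = 0 then 0 else gg m (j-1) s))
        + cc k j * (((j:ℝ)+1)*((j:ℝ)+2) * gg m j s) := by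
    intro j hj
    have hd := dagger m j s (Finset.mem_range.mp hj) hs
    calc ((s:ℝ)+1)*((s:ℝ)+2) * (cc k j * gg m j (s+1))
          + 2*((s:ℝ)+1)*((m:ℝ)-(s:ℝ)) * (cc k j * gg m j s)
          + ((m:ℝ)-(s:ℝ))*((m:ℝ)-(s:ℝ)+1) * (cc k j * (if s = 0 then 0 else gg m j (s-1)))
        = cc k j * (((s:ℝ)+1)*((s:ℝ)+2) * gg m j (s+1) + 2*((s:ℝ)+1)*((m:ℝ)-(s:ℝ)) * gg m j s
            + ((m:ℝ)-(s:ℝ))*((m:ℝ)-(s:ℝ)+1) * (if s = 0 then 0 else gg m j (s-1))) := by ring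
      _ = cc k j * ((j:ℝ)*((j:ℝ)+1) * (if j = 0 then 0 else gg m (j-1) s)
            + ((j:ℝ)+1)*((j:ℝ)+2) * gg m j s) := by rw [hd]
      _ = _ := by ring
  rw [Finset.sum_congr rfl step, Finset.sum_add_distrib]
  obtain ⟨M, rfl⟩ : ∃ M, m = M + 1 := ⟨m-1, by omega⟩
  -- first sum : peel j = 0
  rw [Finset.sum_range_succ' (fun j => cc k j * ((j:ℝ)*((j:ℝ)+1) * (if j = 0 then 0 else gg (M+1) (j-1) s)))]
  simp only [Nat.cast_zero, if_true, Nat.add_sub_cancel, mul_zero, zero_mul, zero_add, add_zero]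
  rw [Finset.sum_range_succ (fun j => cc k j * (((j:ℝ)+1)*((j:ℝ)+2) * gg (M+1) j s)),
    Finset.sum_range_succ (fun j => (k:ℝ)*((k:ℝ)+1) * (cc k j * gg (M+1) j s))]
  have main : ∀ j ∈ Finset.range M,
      cc k (j+1) * (((j:ℝ)+1)*(((j:ℝ)+1)+1) * (if j+1 = 0 then 0 else gg (M+1) j s))
        + cc k j * (((j:ℝ)+1)*((j:ℝ)+2) * gg (M+1) j s)
      = (k:ℝ)*((k:ℝ)+1) * (cc k j * gg (M+1) j s) := by
    intro j hj
    rw [if_neg (by omega : ¬ j+1 = 0)]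
    have hr := cc_rec k j
    calc cc k (j+1) * (((j:ℝ)+1)*(((j:ℝ)+1)+1) * gg (M+1) j s)
          + cc k j * (((j:ℝ)+1)*((j:ℝ)+2) * gg (M+1) j s)
        = ((((j:ℝ)+1)*((j:ℝ)+2)) * cc k (j+1)) * gg (M+1) j s
          + cc k j * (((j:ℝ)+1)*((j:ℝ)+2) * gg (M+1) j s) := by ring
      _ = (((k:ℝ)*((k:ℝ)+1) - ((j:ℝ)+1)*((j:ℝ)+2)) * cc k j) * gg (M+1) j s
          + cc k j * (((j:ℝ)+1)*((j:ℝ)+2) * gg (M+1) j s) := by rw [hr]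
      _ = _ := by ring
  have last : cc k M * (((M:ℝ)+1)*((M:ℝ)+2) * gg (M+1) M s)
      = (k:ℝ)*((k:ℝ)+1) * (cc k M * gg (M+1) M s) := by
    by_cases hkM : k ≤ M
    · rw [cc_eq_zero k hk1 M hkM]; ring
    · have : k = M + 1 := by omega
      have hcast : (k:ℝ) = (M:ℝ) + 1 := by rw [this]; push_cast; ring
      rw [hcast]; ring
  calc (∑ j ∈ Finset.range M, cc k (j+1) * ((((j:ℕ)+1:ℕ):ℝ)*((((j:ℕ)+1:ℕ):ℝ)+1) * (if j+1 = 0 then 0 else gg (M+1) j s)))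
      + (∑ j ∈ Finset.range M, cc k j * (((j:ℝ)+1)*((j:ℝ)+2) * gg (M+1) j s)
        + cc k M * (((M:ℝ)+1)*((M:ℝ)+2) * gg (M+1) M s))
      = (∑ j ∈ Finset.range M,
          (cc k (j+1) * (((j:ℝ)+1)*(((j:ℝ)+1)+1) * (if j+1 = 0 then 0 else gg (M+1) j s))
           + cc k j * (((j:ℝ)+1)*((j:ℝ)+2) * gg (M+1) j s)))
        + cc k M * (((M:ℝ)+1)*((M:ℝ)+2) * gg (M+1) M s) := by
        rw [Finset.sum_add_distrib]; push_cast; ring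
    _ = (∑ j ∈ Finset.range M, (k:ℝ)*((k:ℝ)+1) * (cc k j * gg (M+1) j s))
        + (k:ℝ)*((k:ℝ)+1) * (cc k M * gg (M+1) M s) := by
        rw [Finset.sum_congr rfl main, last]


noncomputable def ff (m k : ℕ) (lam : ℝ) (t : ℕ) : ℝ :=
  if t % 2 = 1 then lam * ww m k (t/2)
  else (((t/2 : ℕ):ℝ) + 1) * ww m k (t/2)
    + (if t/2 = 0 then 0 else ((m:ℝ) + 1 - ((t/2 : ℕ):ℝ)) * ww m k (t/2 - 1))

lemma eigvec (m k : ℕ) (hk1 : 1 ≤ k) (hkm : k ≤ m) (lam : ℝ) (hlam : lam^2 = (k:ℝ)*((k:ℝ)+1)) :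
    ((1/2 : ℝ) • Hmat (2*m) 1 1).mulVec (fun i : Fin (2*m+1) => ff m k lam (i:ℕ))
      = lam • (fun i : Fin (2*m+1) => ff m k lam (i:ℕ)) := by
  funext i
  rw [mulVecA, Pi.smul_apply, smul_eq_mul]
  have him := i.isLt
  rcases Nat.even_or_odd (i:ℕ) with ⟨s, hse⟩ | ⟨s, hse⟩
  · -- i = 2s even
    have hse' : (i:ℕ) = 2*s := by omega
    have hsm : s ≤ m := by omega
    rw [hse']
    have hfi : ff m k lam (2*s) = ((s:ℝ) + 1) * ww m k s
        + (if s = 0 then 0 else ((m:ℝ) + 1 - (s:ℝ)) * ww m k (s - 1)) := by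
      unfold ff
      rw [if_neg (by omega), show (2*s)/2 = s from by omega]
    by_cases hs0 : s = 0
    · have hm : 0 < m := by omega
      rw [if_pos (by omega), if_neg (by omega)]
      have hfo : ff m k lam (2*s+1) = lam * ww m k s := by
        unfold ff
        rw [if_pos (by omega), show (2*s+1)/2 = s from by omega]
      rw [hfo, hfi, show (2*s)/2 + 1 = s + 1 from by omega, if_pos hs0]
      push_cast
      ring
    · by_cases hsm' : s < m
      · rw [if_pos (by omega), if_pos (by omega)]
        have hfo2 : ff m k lam (2*s+1) = lam * ww m k s := by
          unfold ff
          rw [if_pos (by omega), show (2*s+1)/2 = s from by omega]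
        rw [show 2*s-1 = 2*(s-1)+1 from by omega]
        have hfo1 : ff m k lam (2*(s-1)+1) = lam * ww m k (s-1) := by
          unfold ff
          rw [if_pos (by omega), show (2*(s-1)+1)/2 = s-1 from by omega]
        rw [show (2*s)/2 + 1 = s+1 from by omega,
          show m - (2*(s-1)+1)/2 = m+1-s from by omega, hfo2, hfo1, hfi, if_neg hs0]
        push_cast [Nat.cast_sub (by omega : s ≤ m+1)]
        ring
      · have hsm2 : s = m := by omega
        rw [if_neg (by omega), if_pos (by omega)]
        rw [show 2*s-1 = 2*(s-1)+1 from by omega]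
        have hfo1 : ff m k lam (2*(s-1)+1) = lam * ww m k (s-1) := by
          unfold ff
          rw [if_pos (by omega), show (2*(s-1)+1)/2 = s-1 from by omega]
        rw [show m - (2*(s-1)+1)/2 = 1 from by omega, hfo1, hfi, if_neg hs0,
          ww_big m k s (by omega)]
        have hms : (m:ℝ) = (s:ℝ) := by rw [hsm2]
        push_cast
        linear_combination (-(lam * ww m k (s-1))) * hms
  · -- i = 2s+1 odd
    have hse' : (i:ℕ) = 2*s+1 := by omega
    have hsm : s < m := by omega
    rw [hse']
    rw [if_pos (by omega), if_pos (by omega)]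
    have hfe2 : ff m k lam (2*s+1+1) = ((s:ℝ) + 2) * ww m k (s+1)
        + ((m:ℝ) - (s:ℝ)) * ww m k s := by
      unfold ff
      rw [if_neg (by omega), show (2*s+1+1)/2 = s+1 from by omega, if_neg (by omega),
        show s + 1 - 1 = s from by omega]
      push_cast
      ring
    have hfe0 : ff m k lam (2*s) = ((s:ℝ) + 1) * ww m k s
        + (if s = 0 then 0 else ((m:ℝ) + 1 - (s:ℝ)) * ww m k (s - 1)) := by
      unfold ff
      rw [if_neg (by omega), show (2*s)/2 = s from by omega]
    have hfo : ff m k lam (2*s+1) = lam * ww m k s := by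
      unfold ff
      rw [if_pos (by omega), show (2*s+1)/2 = s from by omega]
    rw [show (2*s+1)/2 + 1 = s+1 from by omega, show 2*s+1-1 = 2*s from by omega,
      show m - (2*s)/2 = m - s from by omega, hfe2, hfe0, hfo]
    have e7 : ((m - s : ℕ) : ℝ) = (m:ℝ) - (s:ℝ) := by
      push_cast [Nat.cast_sub (le_of_lt hsm)]
      ring
    rw [e7]
    have hst := star m k hk1 hkm s hsm
    have hsplit : ((m:ℝ) - (s:ℝ)) * (if s = 0 then (0:ℝ) else ((m:ℝ) + 1 - (s:ℝ)) * ww m k (s-1))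
        = ((m:ℝ)-(s:ℝ))*((m:ℝ)-(s:ℝ)+1) * (if s = 0 then 0 else ww m k (s-1)) := by
      split_ifs with h
      · ring
      · ring
    push_cast
    linear_combination hst + hsplit - ww m k s * hlam


noncomputable def f0 (m t : ℕ) : ℝ :=
  if t % 2 = 0 then (-1:ℝ)^(t/2) * (Nat.choose m (t/2) : ℝ) else 0

lemma eigvec0 (m : ℕ) :
    ((1/2 : ℝ) • Hmat (2*m) 1 1).mulVec (fun i : Fin (2*m+1) => f0 m (i:ℕ))
      = (0:ℝ) • (fun i : Fin (2*m+1) => f0 m (i:ℕ)) := by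
  funext i
  rw [mulVecA, Pi.smul_apply, smul_eq_mul, zero_mul]
  have him := i.isLt
  rcases Nat.even_or_odd (i:ℕ) with ⟨s, hse⟩ | ⟨s, hse⟩
  · have hse' : (i:ℕ) = 2*s := by omega
    rw [hse']
    have h1 : (if (2*s)+1 < 2*m+1 then (((2*s)/2+1:ℕ):ℝ) * f0 m (2*s+1) else 0) = 0 := by
      split_ifs with h
      · unfold f0
        rw [if_neg (by omega)]
        ring
      · rfl
    have h2 : (if 0 < 2*s then ((m - (2*s-1)/2 : ℕ):ℝ) * f0 m (2*s-1) else 0) = 0 := by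
      split_ifs with h
      · unfold f0
        rw [if_neg (by omega)]
        ring
      · rfl
    rw [h1, h2, add_zero]
  · have hse' : (i:ℕ) = 2*s+1 := by omega
    have hsm : s < m := by omega
    rw [hse']
    rw [if_pos (by omega), if_pos (by omega)]
    have hf2 : f0 m (2*s+1+1) = (-1:ℝ)^(s+1) * (Nat.choose m (s+1) : ℝ) := by
      unfold f0
      rw [if_pos (by omega), show (2*s+1+1)/2 = s+1 from by omega]
    have hf0' : f0 m (2*s+1-1) = (-1:ℝ)^s * (Nat.choose m s : ℝ) := by
      unfold f0
      rw [if_pos (by omega), show (2*s+1-1)/2 = s from by omega]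
    rw [hf2, hf0', show (2*s+1)/2 + 1 = s+1 from by omega,
      show m - (2*s+1-1)/2 = m - s from by omega]
    have hc : (Nat.choose m (s+1) : ℝ) * ((s:ℝ)+1) = (Nat.choose m s : ℝ) * ((m:ℝ) - (s:ℝ)) := by
      have h := Nat.choose_succ_right_eq m s
      have : ((Nat.choose m (s+1) * (s+1) : ℕ) : ℝ) = ((Nat.choose m s * (m - s) : ℕ) : ℝ) := by
        exact_mod_cast congrArg (fun x : ℕ => (x:ℝ)) h
      push_cast [Nat.cast_sub (le_of_lt hsm)] at this
      linarith [this]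
    have e7 : ((m - s : ℕ) : ℝ) = (m:ℝ) - (s:ℝ) := by
      push_cast [Nat.cast_sub (le_of_lt hsm)]
      ring
    rw [e7, pow_succ]
    push_cast
    linear_combination (-((-1:ℝ)^s)) * hc


lemma mem_spectrum_of_eigvec {N : ℕ} (M : Matrix (Fin N) (Fin N) ℝ) (x : ℝ) (v : Fin N → ℝ)
    (hv : v ≠ 0) (h : M.mulVec v = x • v) : x ∈ spectrum ℝ M := by
  rw [spectrum.mem_iff]
  intro hU
  have h2 : (algebraMap ℝ (Matrix (Fin N) (Fin N) ℝ) x - M).mulVec v = 0 := by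
    rw [Matrix.sub_mulVec, Algebra.algebraMap_eq_smul_one, Matrix.smul_mulVec,
      Matrix.one_mulVec, h, sub_self]
  have hdet : (algebraMap ℝ (Matrix (Fin N) (Fin N) ℝ) x - M).det = 0 :=
    Matrix.exists_mulVec_eq_zero_iff.mp ⟨v, hv, h2⟩
  have h3 := (Matrix.isUnit_iff_isUnit_det _).mp hU
  rw [hdet] at h3
  simp at h3

lemma isRoot_charpoly_of_mem_spectrum {N : ℕ} (M : Matrix (Fin N) (Fin N) ℝ) (x : ℝ)
    (hx : x ∈ spectrum ℝ M) : M.charpoly.IsRoot x := by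
  rw [spectrum.mem_iff] at hx
  have hdet : (algebraMap ℝ (Matrix (Fin N) (Fin N) ℝ) x - M).det = 0 := by
    by_contra h
    exact hx ((Matrix.isUnit_iff_isUnit_det _).mpr (isUnit_iff_ne_zero.mpr h))
  have heval : M.charpoly.eval x = (algebraMap ℝ (Matrix (Fin N) (Fin N) ℝ) x - M).det := by
    rw [Matrix.charpoly]
    rw [show (Matrix.charmatrix M).det.eval x
        = (Polynomial.evalRingHom x) (Matrix.charmatrix M).det from rfl, RingHom.map_det]
    congr 1
    ext i j
    by_cases hij : i = j
    · subst hij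
      simp [Matrix.charmatrix_apply_eq, Matrix.algebraMap_matrix_apply, Matrix.sub_apply]
    · simp [Matrix.charmatrix_apply_ne _ _ _ hij, Matrix.algebraMap_matrix_apply, hij,
        Matrix.sub_apply]
  rw [Polynomial.IsRoot, heval, hdet]


lemma nat_quad_inj (k l : ℕ) (h : (k:ℝ)*((k:ℝ)+1) = (l:ℝ)*((l:ℝ)+1)) : k = l := by
  by_contra hne
  rcases Nat.lt_or_ge k l with hlt | hge
  · have h1 : (k:ℝ) < (l:ℝ) := by exact_mod_cast hlt
    have h2 : (0:ℝ) ≤ (k:ℝ) := Nat.cast_nonneg k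
    nlinarith
  · have hlt : l < k := by omega
    have h1 : (l:ℝ) < (k:ℝ) := by exact_mod_cast hlt
    have h2 : (0:ℝ) ≤ (l:ℝ) := Nat.cast_nonneg l
    nlinarith


/-- for `n = 2m` even, the eigenvalues of `(1/2)·H_n(1,1)` are
`0` and `±√(k(k+1))` for `k = 1, ..., m`. -/
theorem half_Hmat_even_one_one_spectrum (m : ℕ) :
    spectrum ℝ ((1 / 2 : ℝ) • Hmat (2 * m) 1 1)
      = {x : ℝ | x = 0 ∨ ∃ k ∈ Finset.Icc 1 m,
          x = Real.sqrt ((k : ℝ) * ((k : ℝ) + 1))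
            ∨ x = -Real.sqrt ((k : ℝ) * ((k : ℝ) + 1))} := by
  classical
  set A := (1 / 2 : ℝ) • Hmat (2 * m) 1 1 with hA
  set F : Finset ℝ := insert 0 ((Finset.Icc 1 m).biUnion fun k =>
    {Real.sqrt ((k:ℝ)*((k:ℝ)+1)), -Real.sqrt ((k:ℝ)*((k:ℝ)+1))}) with hF
  -- the sqrt values are positive
  have hpos : ∀ k : ℕ, 1 ≤ k → 0 < Real.sqrt ((k:ℝ)*((k:ℝ)+1)) := by
    intro k hk
    apply Real.sqrt_pos.mpr
    have : (1:ℝ) ≤ (k:ℝ) := by exact_mod_cast hk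
    nlinarith
  -- membership of F in spectrum
  have hFmem : ∀ x ∈ F, x ∈ spectrum ℝ A := by
    intro x hx
    rw [hF, Finset.mem_insert] at hx
    rcases hx with rfl | hx
    · refine mem_spectrum_of_eigvec A 0 (fun i : Fin (2*m+1) => f0 m (i:ℕ)) ?_ (eigvec0 m)
      intro hzero
      have h0 := congrFun hzero ⟨0, by omega⟩
      simp only [Pi.zero_apply] at h0
      unfold f0 at h0
      norm_num at h0
    · rw [Finset.mem_biUnion] at hx
      obtain ⟨k, hk, hxk⟩ := hx
      rw [Finset.mem_Icc] at hk
      have hm1 : 0 < m := by omega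
      have hsq : (Real.sqrt ((k:ℝ)*((k:ℝ)+1)))^2 = (k:ℝ)*((k:ℝ)+1) := by
        apply Real.sq_sqrt
        positivity
      have hvne : (fun i : Fin (2*m+1) => ff m k x (i:ℕ)) ≠ 0 := by
        intro hzero
        have h0 := congrFun hzero ⟨0, by omega⟩
        simp only [Pi.zero_apply] at h0
        unfold ff at h0
        norm_num [ww_zero m k hm1] at h0
      simp only [Finset.mem_insert, Finset.mem_singleton] at hxk
      rcases hxk with rfl | rfl
      · exact mem_spectrum_of_eigvec A _ _ hvne (eigvec m k hk.1 hk.2 _ hsq)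
      · exact mem_spectrum_of_eigvec A _ _ hvne
          (eigvec m k hk.1 hk.2 _ (by rw [neg_pow]; simpa using hsq))
  -- cardinality of F
  have hzero_notmem : (0:ℝ) ∉ (Finset.Icc 1 m).biUnion (fun k =>
      ({Real.sqrt ((k:ℝ)*((k:ℝ)+1)), -Real.sqrt ((k:ℝ)*((k:ℝ)+1))} : Finset ℝ)) := by
    rw [Finset.mem_biUnion]
    rintro ⟨k, hk, hmem⟩
    rw [Finset.mem_Icc] at hk
    have := hpos k hk.1
    simp only [Finset.mem_insert, Finset.mem_singleton] at hmem
    rcases hmem with h | h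
    · linarith [h]
    · have : -Real.sqrt ((k:ℝ)*((k:ℝ)+1)) < 0 := by linarith
      linarith [h, this]
  have hdisj : ∀ a ∈ Finset.Icc 1 m, ∀ b ∈ Finset.Icc 1 m, a ≠ b →
      Disjoint ({Real.sqrt ((a:ℝ)*((a:ℝ)+1)), -Real.sqrt ((a:ℝ)*((a:ℝ)+1))} : Finset ℝ)
        ({Real.sqrt ((b:ℝ)*((b:ℝ)+1)), -Real.sqrt ((b:ℝ)*((b:ℝ)+1))} : Finset ℝ) := by
    intro a ha b hb hab
    rw [Finset.mem_Icc] at ha hb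
    have hpa := hpos a ha.1
    have hpb := hpos b hb.1
    rw [Finset.disjoint_left]
    intro x hxa hxb
    simp only [Finset.mem_insert, Finset.mem_singleton] at hxa hxb
    have hinj : Real.sqrt ((a:ℝ)*((a:ℝ)+1)) ≠ Real.sqrt ((b:ℝ)*((b:ℝ)+1)) := by
      intro h
      apply hab
      apply nat_quad_inj
      have h2 := congrArg (fun y : ℝ => y^2) h
      rwa [Real.sq_sqrt (by positivity), Real.sq_sqrt (by positivity)] at h2
    rcases hxa with rfl | rfl <;> rcases hxb with h | h
    · exact hinj h
    · linarith
    · linarith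
    · exact hinj (by linarith)
  have hcard : F.card = 2*m+1 := by
    rw [hF, Finset.card_insert_of_notMem hzero_notmem, Finset.card_biUnion hdisj]
    have hpair : ∀ k ∈ Finset.Icc 1 m,
        ({Real.sqrt ((k:ℝ)*((k:ℝ)+1)), -Real.sqrt ((k:ℝ)*((k:ℝ)+1))} : Finset ℝ).card = 2 := by
      intro k hk
      rw [Finset.mem_Icc] at hk
      have := hpos k hk.1
      apply Finset.card_pair
      intro h
      linarith [h]
    rw [Finset.sum_congr rfl hpair, Finset.sum_const, Nat.card_Icc]
    simp
    omega
  -- charpoly roots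
  have hchne : A.charpoly ≠ 0 := (Matrix.charpoly_monic A).ne_zero
  have hspec_sub : spectrum ℝ A ⊆ ↑(A.charpoly.roots.toFinset) := by
    intro x hx
    rw [Finset.mem_coe, Multiset.mem_toFinset, Polynomial.mem_roots hchne]
    exact isRoot_charpoly_of_mem_spectrum A x hx
  have hFsub : F ⊆ A.charpoly.roots.toFinset := by
    intro x hx
    rw [Multiset.mem_toFinset, Polynomial.mem_roots hchne]
    exact isRoot_charpoly_of_mem_spectrum A x (hFmem x hx)
  have hcard_le : A.charpoly.roots.toFinset.card ≤ F.card := by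
    rw [hcard]
    calc A.charpoly.roots.toFinset.card ≤ Multiset.card A.charpoly.roots :=
          Multiset.toFinset_card_le _
      _ ≤ A.charpoly.natDegree := Polynomial.card_roots' _
      _ = Fintype.card (Fin (2*m+1)) := Matrix.charpoly_natDegree_eq_dim A
      _ = 2*m+1 := Fintype.card_fin _
  have hFeq : F = A.charpoly.roots.toFinset := Finset.eq_of_subset_of_card_le hFsub hcard_le
  have hset : spectrum ℝ A = ↑F := by
    apply Set.Subset.antisymm
    · rw [hFeq]
      exact hspec_sub
    · intro x hx
      exact hFmem x hx
  rw [hset, hF]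
  ext x
  simp only [Finset.coe_insert, Set.mem_insert_iff, Finset.coe_biUnion, Set.mem_iUnion,
    Finset.mem_coe, Finset.mem_insert, Finset.mem_singleton, Set.mem_setOf_eq]
  constructor
  · rintro (rfl | ⟨k, hk, h⟩)
    · exact Or.inl rfl
    · exact Or.inr ⟨k, hk, h⟩
  · rintro (rfl | ⟨k, hk, h⟩)
    · exact Or.inl rfl
    · exact Or.inr ⟨k, hk, h⟩
end

section
/- For n = 2m even and a, b > -1, the symmetric tridiagonal matrix Ĥ_n(a,b) with off-diagonal entries √(k(n+1-k+b)) for k even and √((k+a)(n+1-k)) for k odd (k = 1,...,n) has eigenvalues 0 and ±√(2k(2k+a+b)) for k = 1,...,m. -/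
/-- For `n` even, the off-diagonal entry of the symmetrized matrix `Ĥ_n(a,b)` at
1-based position `k`: `√(k(n+1-k+b))` for `k` even, `√((k+a)(n+1-k))` for `k` odd. -/
noncomputable def symEntryEven (n : ℕ) (a b : ℝ) (k : ℕ) : ℝ :=
  if k % 2 = 0 then Real.sqrt ((k : ℝ) * ((n : ℝ) + 1 - (k : ℝ) + b))
  else Real.sqrt (((k : ℝ) + a) * ((n : ℝ) + 1 - (k : ℝ)))

/-- The real symmetric `(n+1) × (n+1)` tridiagonal matrix `Ĥ_n(a,b)` (`n` even), with
zero diagonal and off-diagonal entries `Ĥ_{k,k+1} = Ĥ_{k+1,k} = symEntryEven n a b k`. -/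
noncomputable def HsymEven (n : ℕ) (a b : ℝ) : Matrix (Fin (n + 1)) (Fin (n + 1)) ℝ :=
  Matrix.of fun i j =>
    if (i : ℕ) + 1 = (j : ℕ) then symEntryEven n a b ((i : ℕ) + 1)
    else if (j : ℕ) + 1 = (i : ℕ) then symEntryEven n a b ((j : ℕ) + 1)
    else 0


open Finset Matrix

namespace HsymAux


/-- squared off-diagonal entries, `n = 2m`. -/
noncomputable def gam (m : ℕ) (a b : ℝ) (k : ℕ) : ℝ :=
  if k % 2 = 0 then (k : ℝ) * (2 * (m : ℝ) + 1 - (k : ℝ) + b)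
  else ((k : ℝ) + a) * (2 * (m : ℝ) + 1 - (k : ℝ))

noncomputable def G (m : ℕ) (a b : ℝ) (t : ℕ) : ℝ := gam m a b (2 * t + 1)

noncomputable def lam (a b : ℝ) (k : ℕ) : ℝ := 2 * (k : ℝ) * (2 * (k : ℝ) + a + b)

noncomputable def PiP (a b y : ℝ) (j : ℕ) : ℝ := ∏ k ∈ Icc 1 j, (y - lam a b k)

noncomputable def Pp (m : ℕ) (a b : ℝ) (j i : ℕ) : ℝ := ∏ t ∈ Ioc (j - i) j, G m a b t

noncomputable def s (m : ℕ) (a b : ℝ) (j i : ℕ) : ℝ :=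
  (-1) ^ i * (j.choose i : ℝ) * Pp m a b j i

noncomputable def R (m : ℕ) (a b y : ℝ) (j : ℕ) : ℝ :=
  ∑ i ∈ range (j + 1), s m a b j i * PiP a b y (j - i)

lemma gam_even (m : ℕ) (a b : ℝ) (t : ℕ) :
    gam m a b (2 * t) = 2 * (t : ℝ) * (2 * (m : ℝ) + 1 - 2 * (t : ℝ) + b) := by
  simp only [gam, Nat.mul_mod_right, if_pos rfl]
  push_cast; ring

lemma G_eq (m : ℕ) (a b : ℝ) (t : ℕ) :
    G m a b t = (2 * (t : ℝ) + 1 + a) * (2 * (m : ℝ) - 2 * (t : ℝ)) := by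
  have h : (2 * t + 1) % 2 = 1 := by omega
  simp only [G, gam, h, one_ne_zero, if_false]
  push_cast; ring

lemma PiP_zero (a b y : ℝ) : PiP a b y 0 = 1 := by simp [PiP]

lemma PiP_succ (a b y : ℝ) (t : ℕ) :
    PiP a b y (t + 1) = (y - lam a b (t + 1)) * PiP a b y t := by
  rw [PiP, Finset.prod_Icc_succ_top (Nat.le_add_left 1 t), PiP, mul_comm]

lemma Pp_zero (m : ℕ) (a b : ℝ) (j : ℕ) : Pp m a b j 0 = 1 := by
  simp [Pp]

lemma s_zero (m : ℕ) (a b : ℝ) (j : ℕ) : s m a b j 0 = 1 := by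
  simp [s, Pp_zero]

lemma s_of_lt (m : ℕ) (a b : ℝ) {j i : ℕ} (h : j < i) : s m a b j i = 0 := by
  simp [s, Nat.choose_eq_zero_of_lt h]

lemma Pp_one (m : ℕ) (a b : ℝ) (J : ℕ) : Pp m a b (J + 1) 1 = G m a b (J + 1) := by
  rw [Pp, show J + 1 - 1 = J from rfl, Finset.prod_Ioc_succ_top le_rfl]
  simp

/-- top split of the product -/
lemma Pp_top (m : ℕ) (a b : ℝ) (j i : ℕ) (h : i ≤ j) :
    Pp m a b (j + 1) (i + 1) = G m a b (j + 1) * Pp m a b j i := by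
  rw [Pp, show j + 1 - (i + 1) = j - i from by omega,
    Finset.prod_Ioc_succ_top (by omega), Pp, mul_comm]

/-- bottom split of the product -/
lemma Pp_bot (m : ℕ) (a b : ℝ) (j i : ℕ) (h : i < j) :
    Pp m a b (j + 1) (i + 2) = G m a b (j - i) * Pp m a b (j + 1) (i + 1) := by
  rw [Pp, Pp, show j + 1 - (i + 1) = j - i from by omega]
  have hset : Ioc (j + 1 - (i + 2)) (j + 1) = insert (j - i) (Ioc (j - i) (j + 1)) := by
    ext t
    simp only [mem_Ioc, mem_insert]
    omega
  rw [hset, Finset.prod_insert (by simp)]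



-- nat binomial identities
lemma nchoose1 (j k : ℕ) :
    (j + 2).choose (k + 2) * ((k + 2) * (k + 1)) = (j + 2) * (j + 1) * j.choose k := by
  have h1 := Nat.add_one_mul_choose_eq (j + 1) (k + 1)
  have h2 := Nat.add_one_mul_choose_eq j k
  calc (j + 2).choose (k + 2) * ((k + 2) * (k + 1))
      = ((j + 2).choose (k + 2) * (k + 2)) * (k + 1) := by ring
    _ = ((j + 2) * (j + 1).choose (k + 1)) * (k + 1) := by rw [← h1]
    _ = (j + 2) * ((j + 1).choose (k + 1) * (k + 1)) := by ring
    _ = (j + 2) * ((j + 1) * j.choose k) := by rw [← h2]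
    _ = (j + 2) * (j + 1) * j.choose k := by ring

lemma nchoose2 (j k : ℕ) :
    (j + 1).choose (k + 2) * ((k + 2) * (k + 1)) = (j + 1) * (j - k) * j.choose k := by
  have h1 := Nat.choose_succ_right_eq (j + 1) (k + 1)
  have h2 := Nat.add_one_mul_choose_eq j k
  calc (j + 1).choose (k + 2) * ((k + 2) * (k + 1))
      = ((j + 1).choose (k + 2) * (k + 2)) * (k + 1) := by ring
    _ = ((j + 1).choose (k + 1) * (j + 1 - (k + 1))) * (k + 1) := by rw [h1]
    _ = ((j + 1).choose (k + 1) * (k + 1)) * (j - k) := by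
        rw [show j + 1 - (k + 1) = j - k from by omega]; ring
    _ = ((j + 1) * j.choose k) * (j - k) := by rw [← h2]
    _ = (j + 1) * (j - k) * j.choose k := by ring

lemma nchoose3 (j k : ℕ) :
    (j + 1).choose (k + 1) * (k + 1) = (j + 1) * j.choose k :=
  (Nat.add_one_mul_choose_eq j k).symm




lemma Pp_top2 (m : ℕ) (a b : ℝ) (j k : ℕ) (h : k ≤ j) :
    Pp m a b (j + 2) (k + 2) = G m a b (j + 2) * Pp m a b (j + 1) (k + 1) := by
  show Pp m a b (j + 1 + 1) (k + 1 + 1) = G m a b (j + 1 + 1) * Pp m a b (j + 1) (k + 1)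
  exact Pp_top m a b (j + 1) (k + 1) (by omega)

lemma hpoly (m : ℕ) (a b : ℝ) (j k : ℕ) (hk : k ≤ j) :
    ((j : ℝ) + 2) * ((j : ℝ) + 1) * G m a b (j + 2)
      = ((j : ℝ) + 1) * ((j : ℝ) - (k : ℝ)) * G m a b (j - k)
        - ((k : ℝ) + 2) * ((j : ℝ) + 1) *
            (lam a b (j + 1 - k) - G m a b (j + 1) - gam m a b (2 * j + 4))
        - ((k : ℝ) + 2) * ((k : ℝ) + 1) * gam m a b (2 * j + 2) := by
  rw [G_eq, G_eq, G_eq, show 2 * j + 4 = 2 * (j + 2) from by ring, gam_even,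
    show 2 * j + 2 = 2 * (j + 1) from by ring, gam_even, lam,
    Nat.cast_sub hk, Nat.cast_sub (show k ≤ j + 1 by omega)]
  push_cast
  ring

lemma hT (m : ℕ) (a b : ℝ) (j k : ℕ) (hk : k ≤ j) :
    ((j + 2).choose (k + 2) : ℝ) * G m a b (j + 2)
      = ((j + 1).choose (k + 2) : ℝ) * G m a b (j - k)
        - (lam a b (j + 1 - k) - G m a b (j + 1) - gam m a b (2 * j + 4)) *
            ((j + 1).choose (k + 1) : ℝ)
        - gam m a b (2 * j + 2) * (j.choose k : ℝ) := by
  have hck : (((k : ℝ) + 2) * ((k : ℝ) + 1)) ≠ 0 := by positivity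
  have e1 : ((j + 2).choose (k + 2) : ℝ) * (((k : ℝ) + 2) * ((k : ℝ) + 1))
      = ((j : ℝ) + 2) * ((j : ℝ) + 1) * (j.choose k : ℝ) := by
    exact_mod_cast congrArg (fun t : ℕ => (t : ℝ)) (nchoose1 j k)
  have e2 : ((j + 1).choose (k + 2) : ℝ) * (((k : ℝ) + 2) * ((k : ℝ) + 1))
      = ((j : ℝ) + 1) * ((j : ℝ) - (k : ℝ)) * (j.choose k : ℝ) := by
    have h' := congrArg (fun t : ℕ => (t : ℝ)) (nchoose2 j k)
    push_cast [Nat.cast_sub hk] at h'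
    linear_combination h'
  have e3 : ((j + 1).choose (k + 1) : ℝ) * ((k : ℝ) + 1)
      = ((j : ℝ) + 1) * (j.choose k : ℝ) := by
    exact_mod_cast congrArg (fun t : ℕ => (t : ℝ)) (nchoose3 j k)
  apply mul_left_cancel₀ hck
  linear_combination G m a b (j + 2) * e1 - G m a b (j - k) * e2
    + ((k : ℝ) + 2) * (lam a b (j + 1 - k) - G m a b (j + 1) - gam m a b (2 * j + 4)) * e3
    + (j.choose k : ℝ) * hpoly m a b j k hk

lemma keylem (m : ℕ) (a b : ℝ) (j k : ℕ) (hk : k ≤ j) :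
    s m a b (j + 2) (k + 2)
      = s m a b (j + 1) (k + 2)
        + (lam a b (j + 1 - k) - G m a b (j + 1) - gam m a b (2 * j + 4)) * s m a b (j + 1) (k + 1)
        - G m a b (j + 1) * gam m a b (2 * j + 2) * s m a b j k := by
  rcases eq_or_lt_of_le hk with rfl | hlt
  · rw [s_of_lt m a b (by omega : k + 1 < k + 2)]
    have hI : G m a b (k + 2)
        = -(lam a b (k + 1 - k) - G m a b (k + 1) - gam m a b (2 * k + 4))
          - gam m a b (2 * k + 2) := by
      rw [show k + 1 - k = 1 from by omega, G_eq, G_eq,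
        show 2 * k + 4 = 2 * (k + 2) from by ring, gam_even,
        show 2 * k + 2 = 2 * (k + 1) from by ring, gam_even, lam]
      push_cast; ring
    simp only [s, Nat.choose_self, Pp_top2 m a b k k le_rfl, Pp_top m a b k k le_rfl]
    linear_combination ((-1 : ℝ) ^ k * G m a b (k + 1) * Pp m a b k k) * hI
  · simp only [s]
    rw [Pp_top2 m a b j k hk, Pp_bot m a b j k hlt, Pp_top m a b j k hk]
    linear_combination ((-1 : ℝ) ^ k * G m a b (j + 1) * Pp m a b j k) * hT m a b j k hk




noncomputable def F2 (m : ℕ) (a b y : ℝ) (j i : ℕ) : ℝ :=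
  if i = 0 then 0
  else (lam a b (j + 3 - i) - G m a b (j + 1) - gam m a b (2 * j + 4)) *
    s m a b (j + 1) (i - 1) * PiP a b y (j + 2 - i)

noncomputable def F3 (m : ℕ) (a b y : ℝ) (j i : ℕ) : ℝ :=
  if i ≤ 1 then 0
  else -(G m a b (j + 1) * gam m a b (2 * j + 2)) * s m a b j (i - 2) * PiP a b y (j + 2 - i)

lemma s_one (m : ℕ) (a b : ℝ) (J : ℕ) :
    s m a b (J + 1) 1 = -((J : ℝ) + 1) * G m a b (J + 1) := by
  simp only [s, Pp_one, Nat.choose_one_right]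
  push_cast; ring

lemma key1 (m : ℕ) (a b : ℝ) (j : ℕ) :
    s m a b (j + 2) 1
      = s m a b (j + 1) 1
        + (lam a b (j + 2) - G m a b (j + 1) - gam m a b (2 * j + 4)) * s m a b (j + 1) 0 := by
  have h2 : s m a b (j + 2) 1 = -((j : ℝ) + 2) * G m a b (j + 2) := by
    show s m a b (j + 1 + 1) 1 = -((j : ℝ) + 2) * G m a b (j + 1 + 1)
    rw [s_one]; push_cast; ring
  rw [h2, s_one, s_zero, mul_one]
  simp only [G_eq]
  rw [show 2 * j + 4 = 2 * (j + 2) from by ring, gam_even, lam]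
  push_cast; ring

lemma Rrec (m : ℕ) (a b y : ℝ) (j : ℕ) :
    R m a b y (j + 2)
      = (y - G m a b (j + 1) - gam m a b (2 * j + 4)) * R m a b y (j + 1)
        - G m a b (j + 1) * gam m a b (2 * j + 2) * R m a b y j := by
  have hterm : ∀ i ∈ range (j + 3),
      s m a b (j + 2) i * PiP a b y (j + 2 - i)
        = s m a b (j + 1) i * PiP a b y (j + 2 - i) + F2 m a b y j i + F3 m a b y j i := by
    intro i hi
    simp only [mem_range] at hi
    match i with
    | 0 => simp [F2, F3, s_zero]
    | 1 =>
        simp only [F2, F3, if_neg one_ne_zero, if_pos le_rfl, add_zero,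
          show j + 3 - 1 = j + 2 from rfl, show j + 2 - 1 = j + 1 from rfl,
          show (1 : ℕ) - 1 = 0 from rfl]
        linear_combination (PiP a b y (j + 1)) * key1 m a b j
    | (i' + 2) =>
        have hij : i' ≤ j := by omega
        simp only [F2, F3, if_neg (by omega : ¬ i' + 2 = 0), if_neg (by omega : ¬ i' + 2 ≤ 1),
          show j + 3 - (i' + 2) = j + 1 - i' from by omega,
          show j + 2 - (i' + 2) = j - i' from by omega,
          show i' + 2 - 1 = i' + 1 from by omega,
          show i' + 2 - 2 = i' from by omega]
        linear_combination (PiP a b y (j - i')) * keylem m a b j i' hij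
  have hS1 : ∑ i ∈ range (j + 3), s m a b (j + 1) i * PiP a b y (j + 2 - i)
      = ∑ i ∈ range (j + 2), s m a b (j + 1) i * PiP a b y (j + 2 - i) := by
    rw [Finset.sum_range_succ, s_of_lt m a b (by omega : j + 1 < j + 2), zero_mul, add_zero]
  have hS2 : ∑ i ∈ range (j + 3), F2 m a b y j i
      = ∑ i ∈ range (j + 2), (lam a b (j + 2 - i) - G m a b (j + 1) - gam m a b (2 * j + 4)) *
          s m a b (j + 1) i * PiP a b y (j + 1 - i) := by
    rw [Finset.sum_range_succ']
    have h0 : F2 m a b y j 0 = 0 := by simp [F2]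
    rw [h0, add_zero]
    refine Finset.sum_congr rfl fun i _ => ?_
    simp only [F2, if_neg (Nat.succ_ne_zero i),
      show j + 3 - (i + 1) = j + 2 - i from by omega,
      show i + 1 - 1 = i from rfl,
      show j + 2 - (i + 1) = j + 1 - i from by omega]
  have hS3 : ∑ i ∈ range (j + 3), F3 m a b y j i
      = -(G m a b (j + 1) * gam m a b (2 * j + 2)) *
          ∑ i ∈ range (j + 1), s m a b j i * PiP a b y (j - i) := by
    rw [Finset.sum_range_succ', Finset.sum_range_succ']
    have h0 : F3 m a b y j 0 = 0 := by simp [F3]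
    have h1 : F3 m a b y j (0 + 1) = 0 := by simp [F3]
    rw [h0, h1, add_zero, add_zero, Finset.mul_sum]
    refine Finset.sum_congr rfl fun i _ => ?_
    simp only [F3, if_neg (by omega : ¬ i + 1 + 1 ≤ 1),
      show j + 2 - (i + 1 + 1) = j - i from by omega,
      show i + 1 + 1 - 2 = i from by omega]
    ring
  have hstep : R m a b y (j + 2)
      = (∑ i ∈ range (j + 2), s m a b (j + 1) i * PiP a b y (j + 2 - i))
        + (∑ i ∈ range (j + 2), (lam a b (j + 2 - i) - G m a b (j + 1) - gam m a b (2 * j + 4)) *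
            s m a b (j + 1) i * PiP a b y (j + 1 - i))
        + -(G m a b (j + 1) * gam m a b (2 * j + 2)) *
            ∑ i ∈ range (j + 1), s m a b j i * PiP a b y (j - i) := by
    rw [R, show j + 2 + 1 = j + 3 from rfl, Finset.sum_congr rfl hterm,
      Finset.sum_add_distrib, Finset.sum_add_distrib, hS1, hS2, hS3]
  rw [hstep, R, R, show j + 1 + 1 = j + 2 from rfl]
  have hAB : (∑ i ∈ range (j + 2), s m a b (j + 1) i * PiP a b y (j + 2 - i))
        + (∑ i ∈ range (j + 2), (lam a b (j + 2 - i) - G m a b (j + 1) - gam m a b (2 * j + 4)) *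
            s m a b (j + 1) i * PiP a b y (j + 1 - i))
      = (y - G m a b (j + 1) - gam m a b (2 * j + 4)) *
          ∑ i ∈ range (j + 2), s m a b (j + 1) i * PiP a b y (j + 1 - i) := by
    rw [← Finset.sum_add_distrib, Finset.mul_sum]
    refine Finset.sum_congr rfl fun i hi => ?_
    simp only [mem_range] at hi
    have hpi : PiP a b y (j + 2 - i) = (y - lam a b (j + 2 - i)) * PiP a b y (j + 1 - i) := by
      rw [show j + 2 - i = (j + 1 - i) + 1 from by omega, PiP_succ,
        show j + 1 - i + 1 = j + 2 - i from by omega]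
    rw [hpi]; ring
  linear_combination hAB




lemma R_zero (m : ℕ) (a b y : ℝ) : R m a b y 0 = 1 := by
  simp [R, s_zero, PiP_zero]

lemma R_one (m : ℕ) (a b y : ℝ) : R m a b y 1 = y - gam m a b 1 - gam m a b 2 := by
  rw [R]
  rw [Finset.sum_range_succ, Finset.sum_range_succ, Finset.sum_range_zero]
  rw [s_zero, show (1:ℕ) - 0 = 1 from rfl, show (1:ℕ) - 1 = 0 from rfl, PiP_zero]
  have h1 : s m a b 1 1 = -(1:ℝ) * G m a b 1 := by
    have := s_one m a b 0
    norm_num at this ⊢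
    rw [this]
  rw [h1, show (1:ℕ) = 0 + 1 from rfl, PiP_succ, PiP_zero]
  have hg1 : gam m a b 1 = (1 + a) * (2 * (m:ℝ)) := by
    simp only [gam]; norm_num
  have hg2 : gam m a b 2 = 2 * (2 * (m:ℝ) - 1 + b) := by
    have := gam_even m a b 1
    norm_num at this
    rw [this]; ring
  have hG1 : G m a b 1 = (3 + a) * (2 * (m:ℝ) - 2) := by
    rw [G_eq]; push_cast; ring
  rw [hg1, hg2, hG1, lam]
  push_cast; ring

lemma seq_pair (m : ℕ) (a b x : ℝ) (u : ℕ → ℝ) (hu0 : u 0 = 1) (hu1 : u 1 = x)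
    (hrec : ∀ N, N + 2 ≤ 2 * m + 1 → u (N + 2) = x * u (N + 1) - gam m a b (N + 1) * u N) :
    ∀ j, 2 * j + 2 ≤ 2 * m + 1 →
      u (2 * j + 1) = x * R m a b (x ^ 2) j
        ∧ u (2 * j + 2) = R m a b (x ^ 2) (j + 1) + gam m a b (2 * j + 2) * R m a b (x ^ 2) j := by
  intro j
  induction j with
  | zero =>
      intro hj
      constructor
      · rw [show 2 * 0 + 1 = 1 from rfl, hu1, R_zero, mul_one]
      · rw [show 2 * 0 + 2 = 0 + 2 from rfl, hrec 0 (by omega), hu1, hu0,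
          show 0 + 1 = 1 from rfl, show 2 * 0 + 2 = 2 from rfl, R_one, R_zero]
        have hg2 : gam m a b 2 = gam m a b (2 * 0 + 2) := by norm_num
        rw [← hg2]
        ring
  | succ j ih =>
      intro hj
      obtain ⟨h1, h2⟩ := ih (by omega)
      have e1 : u (2 * (j + 1) + 1) = x * R m a b (x ^ 2) (j + 1) := by
        have hr := hrec (2 * j + 1) (by omega)
        rw [show 2 * (j + 1) + 1 = 2 * j + 1 + 2 from by ring, hr,
          show 2 * j + 1 + 1 = 2 * j + 2 from by ring, h2, h1,
          show 2 * j + 1 + 1 = 2 * j + 2 from by ring]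
        ring
      refine ⟨e1, ?_⟩
      have hr := hrec (2 * j + 2) (by omega)
      rw [show 2 * (j + 1) + 2 = 2 * j + 2 + 2 from by ring, hr,
        show 2 * j + 2 + 1 = 2 * (j + 1) + 1 from by ring, e1, h2]
      have hG : G m a b (j + 1) = gam m a b (2 * j + 2 + 1) := by
        rw [G, show 2 * (j + 1) + 1 = 2 * j + 2 + 1 from by ring]
      have hR := Rrec m a b (x ^ 2) j
      rw [hG] at hR
      rw [show (j + 1) + 1 = j + 2 from rfl, hR,
        show 2 * (j + 1) + 1 = 2 * j + 2 + 1 from by ring,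
        show 2 * j + 2 + 2 = 2 * j + 4 from by ring]
      ring

lemma u_top (m : ℕ) (a b x : ℝ) (u : ℕ → ℝ) (hu0 : u 0 = 1) (hu1 : u 1 = x)
    (hrec : ∀ N, N + 2 ≤ 2 * m + 1 → u (N + 2) = x * u (N + 1) - gam m a b (N + 1) * u N) :
    u (2 * m + 1) = x * R m a b (x ^ 2) m := by
  cases m with
  | zero => rw [show 2 * 0 + 1 = 1 from rfl, hu1, R_zero, mul_one]
  | succ m' =>
      obtain ⟨h1, h2⟩ := seq_pair (m' + 1) a b x u hu0 hu1 hrec m' (by omega)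
      have hr := hrec (2 * m' + 1) (by omega)
      rw [show 2 * (m' + 1) + 1 = 2 * m' + 1 + 2 from by ring, hr,
        show 2 * m' + 1 + 1 = 2 * m' + 2 from by ring, h2, h1]
      ring

lemma R_top (m : ℕ) (a b y : ℝ) : R m a b y m = PiP a b y m := by
  rw [R]
  rw [Finset.sum_eq_single_of_mem 0 (by simp)]
  · rw [s_zero, Nat.sub_zero, one_mul]
  · intro i hi hne
    simp only [mem_range] at hi
    have hGm : G m a b m = 0 := by rw [G_eq]; ring
    have hmem : m ∈ Ioc (m - i) m := by
      simp only [mem_Ioc]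
      omega
    have : Pp m a b m i = 0 := Finset.prod_eq_zero hmem hGm
    simp [s, this]



noncomputable def Tm (c : ℕ → ℝ) (N : ℕ) : Matrix (Fin N) (Fin N) ℝ :=
  Matrix.of fun i j =>
    if (i : ℕ) + 1 = (j : ℕ) then c ((i : ℕ) + 1)
    else if (j : ℕ) + 1 = (i : ℕ) then c ((j : ℕ) + 1)
    else 0

noncomputable def Ent (x : ℝ) (c : ℕ → ℝ) (p q : ℕ) : ℝ :=
  (if p = q then x else 0) -
    (if p + 1 = q then c (p + 1) else if q + 1 = p then c (q + 1) else 0)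

lemma entry (x : ℝ) (c : ℕ → ℝ) (N : ℕ) (i j : Fin N) :
    (x • (1 : Matrix (Fin N) (Fin N) ℝ) - Tm c N) i j = Ent x c (i : ℕ) (j : ℕ) := by
  simp only [Matrix.sub_apply, Matrix.smul_apply, Matrix.one_apply, Tm, Matrix.of_apply, Ent,
    smul_eq_mul, mul_ite, mul_one, mul_zero, Fin.ext_iff]


lemma Ent_diag (x : ℝ) (c : ℕ → ℝ) (p : ℕ) : Ent x c p p = x := by
  unfold Ent
  rw [if_pos rfl, if_neg (by omega : ¬ p + 1 = p), if_neg (by omega : ¬ p + 1 = p)]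
  ring

lemma Ent_super (x : ℝ) (c : ℕ → ℝ) (p : ℕ) : Ent x c p (p + 1) = -c (p + 1) := by
  unfold Ent
  rw [if_neg (by omega : ¬ p = p + 1), if_pos rfl]
  ring

lemma Ent_sub (x : ℝ) (c : ℕ → ℝ) (q : ℕ) : Ent x c (q + 1) q = -c (q + 1) := by
  unfold Ent
  rw [if_neg (by omega : ¬ q + 1 = q), if_neg (by omega : ¬ q + 1 + 1 = q), if_pos rfl]
  ring

lemma Ent_far (x : ℝ) (c : ℕ → ℝ) (p q : ℕ) (h1 : ¬ p = q) (h2 : ¬ p + 1 = q)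
    (h3 : ¬ q + 1 = p) : Ent x c p q = 0 := by
  unfold Ent
  rw [if_neg h1, if_neg h2, if_neg h3]
  ring

noncomputable def Dd (x : ℝ) (c : ℕ → ℝ) (N : ℕ) : ℝ :=
  (x • (1 : Matrix (Fin N) (Fin N) ℝ) - Tm c N).det

lemma Dd_zero (x : ℝ) (c : ℕ → ℝ) : Dd x c 0 = 1 := Matrix.det_fin_zero

lemma Dd_one (x : ℝ) (c : ℕ → ℝ) : Dd x c 1 = x := by
  rw [Dd, Matrix.det_fin_one, entry]
  simp [Ent]

lemma Dd_rec (x : ℝ) (c : ℕ → ℝ) (N : ℕ) :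
    Dd x c (N + 2) = x * Dd x c (N + 1) - (c (N + 1)) ^ 2 * Dd x c N := by
  have hA : ∀ i j : Fin (N + 2),
      (x • (1 : Matrix (Fin (N+2)) (Fin (N+2)) ℝ) - Tm c (N + 2)) i j = Ent x c (i : ℕ) (j : ℕ) :=
    entry x c (N + 2)
  set A : Matrix (Fin (N + 2)) (Fin (N + 2)) ℝ :=
    x • (1 : Matrix (Fin (N+2)) (Fin (N+2)) ℝ) - Tm c (N + 2) with hAdef
  -- the two submatrix identifications
  have hM1' : A.submatrix Fin.castSucc Fin.castSucc
      = x • (1 : Matrix (Fin (N+1)) (Fin (N+1)) ℝ) - Tm c (N + 1) := by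
    ext i j
    rw [Matrix.submatrix_apply, hA, entry]
    simp
  set p : Fin (N + 2) := Fin.castSucc (Fin.last N) with hp
  have hpv : (p : ℕ) = N := by simp [hp]
  have hcol2 : ∀ j : Fin N, p.succAbove (Fin.castSucc j) = Fin.castSucc (Fin.castSucc j) := by
    intro j
    refine Fin.succAbove_of_castSucc_lt _ _ ?_
    rw [Fin.castSucc_lt_castSucc_iff]
    exact Fin.castSucc_lt_last j
  have hcolN : p.succAbove (Fin.last N) = Fin.last (N + 1) := by
    rw [Fin.succAbove_of_le_castSucc _ _ le_rfl, Fin.succ_last]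
  set M1 : Matrix (Fin (N + 1)) (Fin (N + 1)) ℝ := A.submatrix Fin.castSucc p.succAbove with hM1
  have hM2 : M1.submatrix Fin.castSucc Fin.castSucc
      = x • (1 : Matrix (Fin N) (Fin N) ℝ) - Tm c N := by
    ext i j
    rw [Matrix.submatrix_apply, hM1, Matrix.submatrix_apply, hcol2, hA, entry]
    simp
  -- expand det M1 along its last column
  have hdetM1 : M1.det = -c (N + 1) * Dd x c N := by
    rw [Matrix.det_succ_column M1 (Fin.last N)]
    rw [Finset.sum_eq_single_of_mem (Fin.last N) (Finset.mem_univ _) ?side]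
    · have hent : M1 (Fin.last N) (Fin.last N) = -c (N + 1) := by
        rw [hM1, Matrix.submatrix_apply, hcolN, hA]
        simp only [Fin.coe_castSucc, Fin.val_last]
        exact Ent_super x c N
      rw [hent, Fin.succAbove_last, hM2]
      have hsign : (-1 : ℝ) ^ ((Fin.last N : ℕ) + (Fin.last N : ℕ)) = 1 := by
        rw [Fin.val_last]
        exact Even.neg_one_pow ⟨N, by ring⟩
      rw [hsign, Dd]
      ring
    case side =>
      intro i _ hne
      have hiv : (i : ℕ) ≠ N := fun h => hne (Fin.ext (by simp [h]))
      have hent : M1 i (Fin.last N) = 0 := by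
        rw [hM1, Matrix.submatrix_apply, hcolN, hA]
        simp only [Fin.coe_castSucc, Fin.val_last]
        exact Ent_far x c _ _ (by omega) (by omega) (by omega)
      rw [hent]
      ring
  -- expand det A along the last row
  rw [Dd, ← hAdef, Matrix.det_succ_row A (Fin.last (N + 1)), Fin.sum_univ_castSucc,
    Fin.sum_univ_castSucc]
  have hzero : ∀ j : Fin N,
      (-1 : ℝ) ^ ((Fin.last (N+1) : ℕ) + ((Fin.castSucc (Fin.castSucc j)) : ℕ)) *
          A (Fin.last (N+1)) (Fin.castSucc (Fin.castSucc j)) *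
          (A.submatrix (Fin.last (N+1)).succAbove
            (Fin.castSucc (Fin.castSucc j)).succAbove).det = 0 := by
    intro j
    have hjv : (j : ℕ) < N := j.isLt
    have hent : A (Fin.last (N+1)) (Fin.castSucc (Fin.castSucc j)) = 0 := by
      rw [hA]
      simp only [Fin.coe_castSucc, Fin.val_last]
      exact Ent_far x c _ _ (by omega) (by omega) (by omega)
    rw [hent]
    ring
  rw [Finset.sum_eq_zero fun j _ => hzero j, zero_add]
  -- middle term
  have hentp : A (Fin.last (N+1)) (Fin.castSucc (Fin.last N)) = -c (N + 1) := by
    rw [hA]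
    simp only [Fin.coe_castSucc, Fin.val_last]
    exact Ent_sub x c N
  have hentl : A (Fin.last (N+1)) (Fin.last (N+1)) = x := by
    rw [hA]
    simp only [Fin.val_last]
    exact Ent_diag x c (N + 1)
  have hsign1 : (-1 : ℝ) ^ ((Fin.last (N+1) : ℕ) + ((Fin.castSucc (Fin.last N)) : ℕ)) = -1 := by
    simp only [Fin.val_last, Fin.coe_castSucc]
    exact Odd.neg_one_pow ⟨N, by ring⟩
  have hsign2 : (-1 : ℝ) ^ ((Fin.last (N+1) : ℕ) + ((Fin.last (N+1)) : ℕ)) = 1 := by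
    simp only [Fin.val_last]
    exact Even.neg_one_pow ⟨N + 1, by ring⟩
  rw [hentp, hentl, hsign1, hsign2, Fin.succAbove_last]
  have hMM : (A.submatrix Fin.castSucc (Fin.castSucc (Fin.last N)).succAbove).det
      = -c (N + 1) * Dd x c N := by
    rw [← hp, ← hM1, hdetM1]
  rw [hMM, hM1']
  rw [show (x • (1 : Matrix (Fin (N+1)) (Fin (N+1)) ℝ) - Tm c (N + 1)).det = Dd x c (N+1) from rfl]
  ring

lemma csq (m : ℕ) (a b : ℝ) (ha : -1 < a) (hb : -1 < b) (k : ℕ) (h1 : 1 ≤ k)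
    (h2 : k ≤ 2 * m + 1) : (symEntryEven (2 * m) a b k) ^ 2 = gam m a b k := by
  rcases Nat.even_or_odd k with he | ho
  · have hk0 : k % 2 = 0 := Nat.even_iff.mp he
    have hk2m : k ≤ 2 * m := by omega
    simp only [symEntryEven, gam, hk0, eq_self_iff_true, if_true]
    rw [Real.sq_sqrt]
    · push_cast; ring
    · apply mul_nonneg (Nat.cast_nonneg k)
      have : (k : ℝ) ≤ 2 * m := by exact_mod_cast hk2m
      push_cast
      linarith
  · have hk1 : ¬ k % 2 = 0 := by
      have := Nat.odd_iff.mp ho; omega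
    simp only [symEntryEven, gam, if_neg hk1]
    rw [Real.sq_sqrt]
    · push_cast; ring
    · apply mul_nonneg
      · have : (1 : ℝ) ≤ (k : ℝ) := by exact_mod_cast h1
        linarith
      · have : (k : ℝ) ≤ 2 * m + 1 := by exact_mod_cast h2
        push_cast
        linarith

lemma det_formula (m : ℕ) (a b x : ℝ) (ha : -1 < a) (hb : -1 < b) :
    Dd x (symEntryEven (2 * m) a b) (2 * m + 1) = x * PiP a b (x ^ 2) m := by
  have hrec : ∀ N, N + 2 ≤ 2 * m + 1 →
      Dd x (symEntryEven (2 * m) a b) (N + 2)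
        = x * Dd x (symEntryEven (2 * m) a b) (N + 1)
          - gam m a b (N + 1) * Dd x (symEntryEven (2 * m) a b) N := by
    intro N hN
    rw [Dd_rec, csq m a b ha hb (N + 1) (by omega) (by omega)]
  rw [u_top m a b x _ (Dd_zero x _) (Dd_one x _) hrec, R_top]

lemma sqrt_cases (c x : ℝ) (hc : 0 ≤ c) :
    x ^ 2 = c ↔ x = Real.sqrt c ∨ x = -Real.sqrt c := by
  constructor
  · intro h
    have h2 := congrArg Real.sqrt h
    rw [Real.sqrt_sq_eq_abs] at h2
    exact (abs_eq (Real.sqrt_nonneg c)).mp h2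
  · rintro (rfl | rfl)
    · exact Real.sq_sqrt hc
    · rw [neg_pow]
      simp [Real.sq_sqrt hc]


end HsymAux

/-- for `n = 2m` even and `a, b > -1`, the symmetric tridiagonal matrix
`Ĥ_n(a,b)` has eigenvalues `0` and `±√(2k(2k+a+b))` for `k = 1, ..., m`. -/
theorem HsymEven_spectrum (m : ℕ) (a b : ℝ) (ha : -1 < a) (hb : -1 < b) :
    spectrum ℝ (HsymEven (2 * m) a b)
      = {x : ℝ | x = 0 ∨ ∃ k ∈ Finset.Icc 1 m,
          x = Real.sqrt ((2 * (k : ℝ)) * (2 * (k : ℝ) + a + b))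
            ∨ x = -Real.sqrt ((2 * (k : ℝ)) * (2 * (k : ℝ) + a + b))} := by

  ext x
  simp only [Set.mem_setOf_eq]
  rw [spectrum.mem_iff, Algebra.algebraMap_eq_smul_one, Matrix.isUnit_iff_isUnit_det,
    isUnit_iff_ne_zero, not_not]
  have hHT : HsymEven (2 * m) a b = HsymAux.Tm (symEntryEven (2 * m) a b) (2 * m + 1) := rfl
  rw [hHT]
  rw [show (x • (1 : Matrix (Fin (2 * m + 1)) (Fin (2 * m + 1)) ℝ)
      - HsymAux.Tm (symEntryEven (2 * m) a b) (2 * m + 1)).det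
    = HsymAux.Dd x (symEntryEven (2 * m) a b) (2 * m + 1) from rfl]
  rw [HsymAux.det_formula m a b x ha hb, HsymAux.PiP]
  rw [mul_eq_zero, Finset.prod_eq_zero_iff]
  constructor
  · rintro (h0 | ⟨k, hk, hzero⟩)
    · exact Or.inl h0
    · refine Or.inr ⟨k, hk, ?_⟩
      have hk1 : 1 ≤ k := (Finset.mem_Icc.mp hk).1
      have hpos : (0 : ℝ) ≤ HsymAux.lam a b k := by
        rw [HsymAux.lam]
        have : (1 : ℝ) ≤ (k : ℝ) := by exact_mod_cast hk1
        nlinarith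
      have hx2 : x ^ 2 = HsymAux.lam a b k := by linarith [sub_eq_zero.mp hzero]
      have := (HsymAux.sqrt_cases (HsymAux.lam a b k) x hpos).mp hx2
      rw [HsymAux.lam] at this
      exact this
  · rintro (h0 | ⟨k, hk, hcases⟩)
    · exact Or.inl h0
    · refine Or.inr ⟨k, hk, ?_⟩
      have hk1 : 1 ≤ k := (Finset.mem_Icc.mp hk).1
      have hpos : (0 : ℝ) ≤ HsymAux.lam a b k := by
        rw [HsymAux.lam]
        have : (1 : ℝ) ≤ (k : ℝ) := by exact_mod_cast hk1
        nlinarith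
      have hx2 : x ^ 2 = HsymAux.lam a b k := by
        apply (HsymAux.sqrt_cases (HsymAux.lam a b k) x hpos).mpr
        rw [HsymAux.lam]
        exact hcases
      rw [hx2]
      ring
end

section
/- For n = 2m+1 odd and a, b > -1, the symmetric tridiagonal matrix Ĥ_n(a,b) with off-diagonal entries √(k(n+1-k)) for k even and √((k+a)(n+1-k+b)) for k odd (k = 1,...,n) has eigenvalues ±√((2k+1+a)(2k+1+b)) for k = 0,...,m. -/
/-- For `n` odd, the off-diagonal entry of the symmetrized matrix `Ĥ_n(a,b)` at
1-based position `k`: `√(k(n+1-k))` for `k` even, `√((k+a)(n+1-k+b))` for `k` odd. -/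
noncomputable def symEntryOdd (n : ℕ) (a b : ℝ) (k : ℕ) : ℝ :=
  if k % 2 = 0 then Real.sqrt ((k : ℝ) * ((n : ℝ) + 1 - (k : ℝ)))
  else Real.sqrt (((k : ℝ) + a) * ((n : ℝ) + 1 - (k : ℝ) + b))

/-- The real symmetric `(n+1) × (n+1)` tridiagonal matrix `Ĥ_n(a,b)` (`n` odd), with
zero diagonal and off-diagonal entries `Ĥ_{k,k+1} = Ĥ_{k+1,k} = symEntryOdd n a b k`. -/
noncomputable def HsymOdd (n : ℕ) (a b : ℝ) : Matrix (Fin (n + 1)) (Fin (n + 1)) ℝ :=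
  Matrix.of fun i j =>
    if (i : ℕ) + 1 = (j : ℕ) then symEntryOdd n a b ((i : ℕ) + 1)
    else if (j : ℕ) + 1 = (i : ℕ) then symEntryOdd n a b ((j : ℕ) + 1)
    else 0


namespace HOddProof

open Matrix

variable {N : ℕ}

/-- subdiagonal band matrix: entry `(j+1, j) = f j`. -/
def lo (N : ℕ) (f : ℕ → ℝ) : Matrix (Fin (N+1)) (Fin (N+1)) ℝ :=
  Matrix.of fun i j => if (j:ℕ)+1 = (i:ℕ) then f j else 0

/-- superdiagonal band matrix: entry `(i, i+1) = f i`. -/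
def up (N : ℕ) (f : ℕ → ℝ) : Matrix (Fin (N+1)) (Fin (N+1)) ℝ :=
  Matrix.of fun i j => if (i:ℕ)+1 = (j:ℕ) then f i else 0

/-- diagonal matrix from a `ℕ`-indexed function. -/
def dg (N : ℕ) (f : ℕ → ℝ) : Matrix (Fin (N+1)) (Fin (N+1)) ℝ :=
  Matrix.diagonal fun i => f (i : ℕ)

lemma lo_apply (f : ℕ → ℝ) (i j : Fin (N+1)) :
    lo N f i j = if (j:ℕ)+1 = (i:ℕ) then f j else 0 := rfl

lemma up_apply (f : ℕ → ℝ) (i j : Fin (N+1)) :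
    up N f i j = if (i:ℕ)+1 = (j:ℕ) then f i else 0 := rfl

lemma dg_apply (f : ℕ → ℝ) (i j : Fin (N+1)) :
    dg N f i j = if (i:ℕ) = (j:ℕ) then f i else 0 := by
  rw [dg, Matrix.diagonal_apply]
  congr 1
  simp [Fin.ext_iff]

lemma mul_lo_apply (A : Matrix (Fin (N+1)) (Fin (N+1)) ℝ) (f : ℕ → ℝ) (i j : Fin (N+1)) :
    (A * lo N f) i j = if h : (j:ℕ)+1 < N+1 then A i ⟨(j:ℕ)+1, h⟩ * f j else 0 := by
  rw [Matrix.mul_apply]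
  split_ifs with h
  · rw [Finset.sum_eq_single (⟨(j:ℕ)+1, h⟩ : Fin (N+1))]
    · simp [lo_apply]
    · intro b _ hb
      rw [lo_apply, if_neg, mul_zero]
      intro hc; exact hb (Fin.ext hc.symm)
    · simp
  · apply Finset.sum_eq_zero
    intro k _
    rw [lo_apply, if_neg, mul_zero]
    intro hc; omega
    -- (j:ℕ)+1 = (k:ℕ) impossible: k < N+1 ≤ j+1

lemma lo_mul_apply (f : ℕ → ℝ) (A : Matrix (Fin (N+1)) (Fin (N+1)) ℝ) (i j : Fin (N+1)) :
    (lo N f * A) i j = if h : 1 ≤ (i:ℕ) then f ((i:ℕ)-1) * A ⟨(i:ℕ)-1, by omega⟩ j else 0 := by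
  rw [Matrix.mul_apply]
  split_ifs with h
  · rw [Finset.sum_eq_single (⟨(i:ℕ)-1, by omega⟩ : Fin (N+1))]
    · rw [lo_apply, if_pos (by simp only [Fin.val_mk]; omega)]
    · intro b _ hb
      rw [lo_apply, if_neg, zero_mul]
      intro hc; apply hb; apply Fin.ext; simp; omega
    · simp
  · apply Finset.sum_eq_zero
    intro k _
    rw [lo_apply, if_neg, zero_mul]
    omega

lemma up_mul_apply (f : ℕ → ℝ) (A : Matrix (Fin (N+1)) (Fin (N+1)) ℝ) (i j : Fin (N+1)) :
    (up N f * A) i j = if h : (i:ℕ)+1 < N+1 then f i * A ⟨(i:ℕ)+1, h⟩ j else 0 := by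
  rw [Matrix.mul_apply]
  split_ifs with h
  · rw [Finset.sum_eq_single (⟨(i:ℕ)+1, h⟩ : Fin (N+1))]
    · simp [up_apply]
    · intro b _ hb
      rw [up_apply, if_neg, zero_mul]
      intro hc; exact hb (Fin.ext hc.symm)
    · simp
  · apply Finset.sum_eq_zero
    intro k _
    rw [up_apply, if_neg, zero_mul]
    omega

lemma mul_up_apply (A : Matrix (Fin (N+1)) (Fin (N+1)) ℝ) (f : ℕ → ℝ) (i j : Fin (N+1)) :
    (A * up N f) i j = if h : 1 ≤ (j:ℕ) then A i ⟨(j:ℕ)-1, by omega⟩ * f ((j:ℕ)-1) else 0 := by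
  rw [Matrix.mul_apply]
  split_ifs with h
  · rw [Finset.sum_eq_single (⟨(j:ℕ)-1, by omega⟩ : Fin (N+1))]
    · rw [up_apply, if_pos (by simp only [Fin.val_mk]; omega)]
    · intro b _ hb
      rw [up_apply, if_neg, mul_zero]
      intro hc; apply hb; apply Fin.ext; simp; omega
    · simp
  · apply Finset.sum_eq_zero
    intro k _
    rw [up_apply, if_neg, mul_zero]
    omega

lemma dg_mul_apply (f : ℕ → ℝ) (A : Matrix (Fin (N+1)) (Fin (N+1)) ℝ) (i j : Fin (N+1)) :
    (dg N f * A) i j = f i * A i j := by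
  rw [dg, Matrix.diagonal_mul]

lemma mul_dg_apply (A : Matrix (Fin (N+1)) (Fin (N+1)) ℝ) (f : ℕ → ℝ) (i j : Fin (N+1)) :
    (A * dg N f) i j = A i j * f j := by
  rw [dg, Matrix.mul_diagonal]

/-- diagonal of `J(m,a,b)` -/
noncomputable def dJ (m : ℕ) (a b : ℝ) (i : ℕ) : ℝ :=
  (2*(i:ℝ)+1+a) * (2*(m:ℝ)+1-2*(i:ℝ)+b) + (2*(i:ℝ)+2) * (2*(m:ℝ)-2*(i:ℝ))

/-- subdiagonal of `J(m,a,b)` (products of opposite off-diagonal pairs) -/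
noncomputable def o2f (m : ℕ) (a b : ℝ) (i : ℕ) : ℝ :=
  ((2*(i:ℝ)+2) * (2*(m:ℝ)-2*(i:ℝ))) * ((2*(i:ℝ)+3+a) * (2*(m:ℝ)-1-2*(i:ℝ)+b))

noncomputable def lff (m : ℕ) (b : ℝ) (i : ℕ) : ℝ := (2*(i:ℝ)+2) * (2*(m:ℝ)-1-2*(i:ℝ)+b)

noncomputable def uff (m : ℕ) (a : ℝ) (i : ℕ) : ℝ := (2*(m:ℝ)-2*(i:ℝ)) * (2*(i:ℝ)+3+a)

noncomputable def lam0 (a b : ℝ) : ℝ := (1+a)*(1+b)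

noncomputable def Jm (m : ℕ) (a b : ℝ) : Matrix (Fin (m+1)) (Fin (m+1)) ℝ :=
  dg m (dJ m a b) + up m (fun _ => 1) + lo m (o2f m a b)

noncomputable def Lm (m : ℕ) (b : ℝ) : Matrix (Fin (m+1)) (Fin (m+1)) ℝ :=
  1 + lo m (lff m b)

noncomputable def kdf (m : ℕ) (a b : ℝ) (i : ℕ) : ℝ :=
  if i = m then lam0 a b else uff m a i + lff m b i + lam0 a b

noncomputable def ksf (m : ℕ) (a b : ℝ) (i : ℕ) : ℝ := uff m a (i+1) * lff m b i

noncomputable def Km (m : ℕ) (a b : ℝ) : Matrix (Fin (m+1)) (Fin (m+1)) ℝ :=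
  dg m (kdf m a b) + up m (fun _ => 1) + lo m (ksf m a b)

lemma JL_eq_LK (m : ℕ) (a b : ℝ) : Jm m a b * Lm m b = Lm m b * Km m a b := by
  ext i j
  obtain ⟨iv, hiv⟩ := i
  obtain ⟨jv, hjv⟩ := j
  rw [Lm, Matrix.mul_add, Matrix.mul_one, Matrix.add_mul, Matrix.one_mul,
    Matrix.add_apply, Matrix.add_apply, mul_lo_apply, lo_mul_apply]
  simp only [Jm, Km, Matrix.add_apply, dg_apply, up_apply, lo_apply, Fin.val_mk]
  have H : iv = jv ∨ iv = jv+1 ∨ iv = jv+2 ∨ jv = iv+1 ∨ jv = iv+2 ∨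
      (iv+3 ≤ jv ∨ jv+3 ≤ iv) := by omega
  rcases H with h|h|h|h|h|h
  · -- diagonal: iv = jv
    subst h
    have e1 : ¬(iv + 1 = iv) := by omega
    have e2 : ¬(iv = iv + 1) := by omega
    have e3 : ¬(iv + 1 + 1 = iv) := by omega
    simp only [Nat.add_sub_cancel, e1, e2, e3, if_true, if_false, eq_self_iff_true,
      add_zero, zero_add, one_mul]
    rcases Nat.lt_or_ge iv m with h1 | h1
    · rw [dif_pos (by omega)]
      simp only [kdf, if_neg (show ¬(iv = m) by omega)]
      rcases Nat.eq_zero_or_pos iv with h2 | h2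
      · subst h2
        rw [dif_neg (by omega)]
        simp only [dJ, lff, uff, lam0]
        push_cast
        ring
      · rw [dif_pos (show 1 ≤ iv from h2)]
        have e4 : ¬(iv - 1 = iv) := by omega
        have e5 : iv - 1 + 1 = iv := by omega
        have e6 : ¬(iv + 1 = iv - 1) := by omega
        simp only [e4, e5, e6, if_true, if_false, eq_self_iff_true, if_neg,
          add_zero, zero_add, mul_one]
        try simp only [kdf, if_neg (show ¬(iv - 1 = m) by omega)]
        simp only [dJ, lff, uff, lam0]
        push_cast [Nat.cast_sub h2]
        ring
    · have hm : iv = m := by omega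
      subst hm
      rw [dif_neg (by omega)]
      simp only [kdf, eq_self_iff_true, if_true]
      rcases Nat.eq_zero_or_pos iv with h2 | h2
      · subst h2
        rw [dif_neg (by omega)]
        simp only [dJ, lam0]
        push_cast
        ring
      · rw [dif_pos (show 1 ≤ iv from h2)]
        have e4 : ¬(iv - 1 = iv) := by omega
        have e5 : iv - 1 + 1 = iv := by omega
        have e6 : ¬(iv + 1 = iv - 1) := by omega
        simp only [e4, e5, e6, if_true, if_false, eq_self_iff_true, add_zero, zero_add, mul_one]
        try simp only [kdf, if_neg (show ¬(iv - 1 = iv) by omega)]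
        simp only [dJ, lff, uff, lam0]
        push_cast [Nat.cast_sub h2]
        ring
  · -- subdiagonal: iv = jv + 1
    subst h
    have e1 : ¬(jv + 1 = jv) := by omega
    have e2 : ¬(jv + 1 + 1 = jv) := by omega
    have e3 : ¬(jv + 1 + 1 = jv + 1) := by omega
    have e4 : ¬(jv + 1 + 1 + 1 = jv + 1) := by omega
    simp only [Nat.add_sub_cancel, e1, e2, e3, e4, if_true, if_false, eq_self_iff_true,
      add_zero, zero_add, mul_one, one_mul]
    rw [dif_pos (by omega), dif_pos (by omega)]
    have e5 : ¬(jv + 1 = jv + 1 + 1) := by omega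
    try simp only [e1, e2, e3, e5, if_true, if_false, eq_self_iff_true, add_zero, zero_add, mul_one]
    simp only [kdf, if_neg (show ¬(jv = m) by omega)]
    simp only [dJ, o2f, lff, uff, ksf, lam0]
    push_cast
    ring
  · -- iv = jv + 2
    subst h
    have e1 : ¬(jv + 2 = jv) := by omega
    have e2 : ¬(jv + 2 + 1 = jv) := by omega
    have e3 : ¬(jv + 1 = jv + 2) := by omega
    have e4 : ¬(jv + 2 = jv + 1) := by omega
    have e5 : ¬(jv + 2 + 1 = jv + 1) := by omega
    have e6 : jv + 1 + 1 = jv + 2 := by omega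
    have e7 : ¬(jv + 1 + 1 + 1 = jv + 2) := by omega
    simp only [Nat.add_sub_cancel, e1, e2, e3, e4, e5, e6, e7, if_true, if_false,
      eq_self_iff_true, add_zero, zero_add, mul_one, one_mul]
    rw [dif_pos (by omega), dif_pos (by omega)]
    have e8 : ¬(jv + 2 - 1 = jv) := by omega
    have e9 : ¬(jv + 2 - 1 + 1 = jv) := by omega
    have e10 : jv + 2 - 1 = jv + 1 := by omega
    have f1 : ¬(jv + 1 = jv) := by omega
    have f2 : ¬(jv + 1 + 1 = jv) := by omega
    simp only [e10, f1, f2, if_false, eq_self_iff_true, if_true, add_zero, zero_add, one_mul]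
    simp only [o2f, lff, ksf, uff]
    push_cast
    ring
  · -- superdiagonal: jv = iv + 1
    subst h
    have e1 : ¬(iv = iv + 1) := by omega
    have e2 : ¬(iv + 1 + 1 = iv) := by omega
    have e3 : ¬(iv = iv + 1 + 1) := by omega
    have e4 : ¬(iv + 1 = iv + 1 + 1) := by omega
    have e5 : ¬(iv + 1 + 1 + 1 = iv) := by omega
    simp only [Nat.add_sub_cancel, e1, e2, e3, e4, e5, if_true, if_false, eq_self_iff_true,
      add_zero, zero_add, zero_mul, mul_zero, dite_eq_ite, ite_self]
    rcases Nat.eq_zero_or_pos iv with h2 | h2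
    · subst h2
      rw [dif_neg (by omega), add_zero]
    · rw [dif_pos (show 1 ≤ iv from h2)]
      have e6 : ¬(iv - 1 = iv + 1) := by omega
      have e7 : ¬(iv - 1 + 1 = iv + 1) := by omega
      have e8 : ¬(iv + 1 + 1 = iv - 1) := by omega
      simp only [e6, e7, e8, if_false, add_zero, mul_zero, dite_eq_ite, ite_self]
  · -- jv = iv + 2
    subst h
    have e1 : ¬(iv = iv + 2) := by omega
    have e2 : ¬(iv + 1 = iv + 2) := by omega
    have e3 : ¬(iv + 2 + 1 = iv) := by omega
    have e4 : ¬(iv = iv + 2 + 1) := by omega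
    have e5 : ¬(iv + 1 = iv + 2 + 1) := by omega
    have e6 : ¬(iv + 2 + 1 + 1 = iv) := by omega
    have e7 : ¬(iv - 1 = iv + 2) := by omega
    have e8 : ¬(iv - 1 + 1 = iv + 2) := by omega
    have e9 : ¬(iv + 2 + 1 = iv - 1) := by omega
    simp only [Nat.add_sub_cancel, e1, e2, e3, e4, e5, e6, e7, e8, e9, if_false,
      add_zero, zero_add, zero_mul, mul_zero, dite_eq_ite, ite_self]
  · -- |iv - jv| ≥ 3
    have e1 : ¬(iv = jv) := by omega
    have e2 : ¬(iv + 1 = jv) := by omega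
    have e3 : ¬(jv + 1 = iv) := by omega
    have e4 : ¬(iv = jv + 1) := by omega
    have e5 : ¬(iv + 1 = jv + 1) := by omega
    have e6 : ¬(jv + 1 + 1 = iv) := by omega
    have e7 : ¬(iv - 1 = jv) := by omega
    have e8 : ¬(iv - 1 + 1 = jv) := by omega
    have e9 : ¬(jv + 1 = iv - 1) := by omega
    simp only [e1, e2, e3, e4, e5, e6, e7, e8, e9, if_false,
      add_zero, zero_add, zero_mul, mul_zero, dite_eq_ite, ite_self]

lemma det_Lm (m : ℕ) (b : ℝ) : (Lm m b).det = 1 := by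
  have h : (Lm m b).BlockTriangular OrderDual.toDual := by
    intro i j hij
    have hij' : (i:ℕ) < (j:ℕ) := hij
    simp only [Lm, Matrix.add_apply, lo_apply, Matrix.one_apply]
    rw [if_neg (by intro hc; subst hc; omega), if_neg (by omega)]
    norm_num
  rw [Matrix.det_of_lowerTriangular _ h]
  apply Finset.prod_eq_one
  intro i _
  simp only [Lm, Matrix.add_apply, lo_apply, Matrix.one_apply_eq]
  rw [if_neg (by omega)]
  norm_num

lemma det_J_eq_det_K (m : ℕ) (a b y : ℝ) :
    (y • (1 : Matrix (Fin (m+1)) (Fin (m+1)) ℝ) - Jm m a b).det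
      = (y • 1 - Km m a b).det := by
  have key : (y • 1 - Jm m a b) * Lm m b = Lm m b * (y • 1 - Km m a b) := by
    rw [Matrix.sub_mul, Matrix.mul_sub, JL_eq_LK]
    congr 1
    rw [Matrix.smul_mul, Matrix.mul_smul, Matrix.one_mul, Matrix.mul_one]
  have := congrArg Matrix.det key
  rwa [Matrix.det_mul, Matrix.det_mul, det_Lm, mul_one, one_mul] at this

lemma det_K_succ (m : ℕ) (a b y : ℝ) :
    (y • (1 : Matrix (Fin (m+2)) (Fin (m+2)) ℝ) - Km (m+1) a b).det
      = (y - lam0 a b) * (y • 1 - Jm m (a+2) (b+2)).det := by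
  set A := (y • (1 : Matrix (Fin (m+2)) (Fin (m+2)) ℝ) - Km (m+1) a b) with hA
  set e := (finSumFinEquiv : Fin (m+1) ⊕ Fin 1 ≃ Fin (m+2)) with he
  have h21 : (A.submatrix e e).toBlocks₂₁ = 0 := by
    ext i j
    obtain ⟨jv, hjv⟩ := j
    have hi0 : (i : ℕ) = 0 := by omega
    simp only [Matrix.toBlocks₂₁, Matrix.submatrix_apply, Matrix.of_apply, hA, he,
      Matrix.sub_apply, Matrix.smul_apply, Matrix.one_apply, finSumFinEquiv_apply_right,
      finSumFinEquiv_apply_left, Fin.ext_iff, Fin.coe_natAdd, Fin.coe_castAdd, Fin.val_mk, hi0,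
      smul_eq_mul, mul_ite, mul_one, mul_zero,
      Km, Matrix.add_apply, dg_apply, up_apply, lo_apply, Matrix.zero_apply]
    have f1 : ¬(m + 1 + 0 = jv) := by omega
    have f2 : ¬(m + 1 + 0 + 1 = jv) := by omega
    simp only [f1, f2, if_false, zero_add, add_zero, zero_sub, neg_eq_zero]
    split_ifs with hc
    · have hj : jv = m := by omega
      subst hj
      simp only [ksf, uff, lff]
      push_cast
      ring
    · rfl
  have h11 : (A.submatrix e e).toBlocks₁₁ = y • 1 - Jm m (a+2) (b+2) := by
    ext i j
    obtain ⟨iv, hiv⟩ := i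
    obtain ⟨jv, hjv⟩ := j
    simp only [Matrix.toBlocks₁₁, Matrix.submatrix_apply, Matrix.of_apply, hA, he,
      Matrix.sub_apply, Matrix.smul_apply, Matrix.one_apply, finSumFinEquiv_apply_left,
      Fin.ext_iff, Fin.coe_castAdd, Fin.val_mk, smul_eq_mul, mul_ite, mul_one, mul_zero,
      Jm, Km, Matrix.add_apply, dg_apply, up_apply, lo_apply]
    have H : iv = jv ∨ iv = jv+1 ∨ jv = iv+1 ∨ (iv+2 ≤ jv ∨ jv+2 ≤ iv) := by omega
    rcases H with h|h|h|h
    · subst h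
      have f1 : ¬(iv + 1 = iv) := by omega
      simp only [f1, if_false, eq_self_iff_true, if_true, add_zero]
      simp only [kdf, if_neg (show ¬(iv = m+1) by omega), dJ, uff, lff, lam0]
      push_cast
      ring
    · subst h
      have f1 : ¬(jv + 1 = jv) := by omega
      have f2 : ¬(jv + 1 + 1 = jv) := by omega
      simp only [f1, f2, if_false, eq_self_iff_true, if_true, add_zero, zero_add, zero_sub]
      simp only [ksf, o2f, uff, lff]
      push_cast
      ring
    · subst h
      have f1 : ¬(iv = iv + 1) := by omega
      have f2 : ¬(iv + 1 + 1 = iv) := by omega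
      simp only [f1, f2, if_false, eq_self_iff_true, if_true, add_zero, zero_add, zero_sub]
    · have f1 : ¬(iv = jv) := by omega
      have f2 : ¬(iv + 1 = jv) := by omega
      have f3 : ¬(jv + 1 = iv) := by omega
      simp only [f1, f2, f3, if_false, add_zero, sub_zero, zero_sub, neg_zero]
  have h22 : (A.submatrix e e).toBlocks₂₂.det = y - lam0 a b := by
    rw [Matrix.det_fin_one]
    have h0 : ((0 : Fin 1) : ℕ) = 0 := rfl
    simp only [Matrix.toBlocks₂₂, Matrix.submatrix_apply, Matrix.of_apply, hA, he,
      Matrix.sub_apply, Matrix.smul_apply, Matrix.one_apply, finSumFinEquiv_apply_right,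
      Fin.ext_iff, Fin.coe_natAdd, h0, smul_eq_mul, mul_ite, mul_one, mul_zero,
      Km, Matrix.add_apply, dg_apply, up_apply, lo_apply]
    have f1 : ¬(m + 1 + 0 + 1 = m + 1 + 0) := by omega
    simp only [f1, if_false, eq_self_iff_true, if_true, add_zero]
    norm_num [kdf]
  rw [← Matrix.det_submatrix_equiv_self e A, ← Matrix.fromBlocks_toBlocks (A.submatrix e e),
    h21, h11, Matrix.det_fromBlocks_zero₂₁, h22, mul_comm]

lemma det_Jm (m : ℕ) (a b y : ℝ) :
    (y • (1 : Matrix (Fin (m+1)) (Fin (m+1)) ℝ) - Jm m a b).det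
      = ∏ k ∈ Finset.range (m+1), (y - (2*(k:ℝ)+1+a) * (2*(k:ℝ)+1+b)) := by
  induction m generalizing a b with
  | zero =>
      rw [Matrix.det_fin_one, Finset.prod_range_one]
      simp only [Matrix.sub_apply, Matrix.smul_apply, Matrix.one_apply_eq, smul_eq_mul, mul_one,
        Jm, Matrix.add_apply, dg_apply, up_apply, lo_apply, Fin.val_eq_zero,
        show ¬(0+1 = 0) from by omega, eq_self_iff_true, if_true, if_false, add_zero, dJ]
      push_cast
      ring
  | succ n ih =>
      rw [det_J_eq_det_K, det_K_succ, ih]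
      conv_rhs => rw [Finset.prod_range_succ']
      rw [mul_comm]
      congr 1
      · exact Finset.prod_congr rfl fun k _ => by push_cast; ring
      · rw [lam0]; push_cast; ring

noncomputable def cdf (m : ℕ) (a b : ℝ) (i : ℕ) : ℝ :=
  Real.sqrt ((2*(i:ℝ)+1+a) * (2*(m:ℝ)+1-2*(i:ℝ)+b))

noncomputable def cef (m : ℕ) (i : ℕ) : ℝ :=
  Real.sqrt ((2*(i:ℝ)+2) * (2*(m:ℝ)-2*(i:ℝ)))

noncomputable def Cm (m : ℕ) (a b : ℝ) : Matrix (Fin (m+1)) (Fin (m+1)) ℝ :=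
  dg m (cdf m a b) + lo m (cef m)

lemma Cm_transpose (m : ℕ) (a b : ℝ) :
    (Cm m a b)ᵀ = dg m (cdf m a b) + up m (cef m) := by
  ext i j
  simp only [Matrix.transpose_apply, Cm, Matrix.add_apply, dg_apply, up_apply, lo_apply]
  congr 1
  by_cases h : (i:ℕ) = (j:ℕ)
  · rw [if_pos h.symm, if_pos h, h]
  · rw [if_neg (fun hc => h hc.symm), if_neg h]

noncomputable def delta (m : ℕ) (a b : ℝ) : ℕ → ℝ
  | 0 => 1
  | i+1 => delta m a b i * (cef m i * cdf m a b (i+1))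

lemma cdf_pos (m : ℕ) (a b : ℝ) (ha : -1 < a) (hb : -1 < b) (i : ℕ) (hi : i ≤ m) :
    0 < cdf m a b i := by
  apply Real.sqrt_pos.mpr
  apply mul_pos
  · have : (0:ℝ) ≤ 2*(i:ℝ) := by positivity
    linarith
  · have : (i:ℝ) ≤ (m:ℝ) := by exact_mod_cast hi
    linarith

lemma cef_pos (m : ℕ) (i : ℕ) (hi : i < m) : 0 < cef m i := by
  apply Real.sqrt_pos.mpr
  have : (i:ℝ) + 1 ≤ (m:ℝ) := by exact_mod_cast hi
  have h0 : (0:ℝ) ≤ (i:ℝ) := by positivity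
  apply mul_pos <;> linarith

lemma delta_pos (m : ℕ) (a b : ℝ) (ha : -1 < a) (hb : -1 < b) :
    ∀ i, i ≤ m → 0 < delta m a b i := by
  intro i
  induction i with
  | zero => intro _; rw [delta]; norm_num
  | succ n ih =>
      intro hn
      rw [delta]
      have h1 := ih (by omega)
      have h2 := cef_pos m n (by omega)
      have h3 := cdf_pos m a b ha hb (n+1) hn
      positivity

lemma cdf_sq (m : ℕ) (a b : ℝ) (ha : -1 < a) (hb : -1 < b) (i : ℕ) (hi : i ≤ m) :
    cdf m a b i * cdf m a b i = (2*(i:ℝ)+1+a) * (2*(m:ℝ)+1-2*(i:ℝ)+b) := by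
  apply Real.mul_self_sqrt
  have h1 : (0:ℝ) ≤ 2*(i:ℝ) := by positivity
  have h2 : (i:ℝ) ≤ (m:ℝ) := by exact_mod_cast hi
  have := mul_pos (show (0:ℝ) < 2*(i:ℝ)+1+a by linarith) (show (0:ℝ) < 2*(m:ℝ)+1-2*(i:ℝ)+b by linarith)
  linarith

lemma cef_sq (m : ℕ) (i : ℕ) (hi : i ≤ m) :
    cef m i * cef m i = (2*(i:ℝ)+2) * (2*(m:ℝ)-2*(i:ℝ)) := by
  apply Real.mul_self_sqrt
  have h1 : (0:ℝ) ≤ (i:ℝ) := by positivity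
  have h2 : (i:ℝ) ≤ (m:ℝ) := by exact_mod_cast hi
  have : (0:ℝ) ≤ 2*(i:ℝ)+2 := by linarith
  nlinarith

lemma J_conj (m : ℕ) (a b : ℝ) (ha : -1 < a) (hb : -1 < b) :
    Jm m a b * dg m (delta m a b) = dg m (delta m a b) * ((Cm m a b)ᵀ * Cm m a b) := by
  rw [Cm_transpose, Cm]
  simp only [Matrix.mul_add, Matrix.add_mul]
  ext i j
  obtain ⟨iv, hiv⟩ := i
  obtain ⟨jv, hjv⟩ := j
  simp only [Matrix.add_apply]
  rw [mul_dg_apply]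
  simp only [dg_mul_apply, up_mul_apply]
  simp only [Jm, Matrix.add_apply, dg_apply, up_apply, lo_apply, Fin.val_mk]
  have H : iv = jv ∨ iv = jv+1 ∨ jv = iv+1 ∨ (iv+2 ≤ jv ∨ jv+2 ≤ iv) := by omega
  rcases H with h|h|h|h
  · -- diagonal
    subst h
    have f1 : ¬(iv + 1 = iv) := by omega
    simp only [f1, if_false, eq_self_iff_true, if_true, mul_zero, add_zero, zero_add,
      dite_eq_ite, ite_self]
    rcases Nat.lt_or_ge iv m with h1 | h1
    · rw [if_pos (show iv + 1 < m + 1 by omega)]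
      have edJ : dJ m a b iv = cdf m a b iv * cdf m a b iv + cef m iv * cef m iv := by
        rw [cdf_sq m a b ha hb iv (by omega), cef_sq m iv (by omega), dJ]
      rw [edJ]
      ring
    · have hm : iv = m := by omega
      subst hm
      rw [if_neg (show ¬(iv + 1 < iv + 1) by omega)]
      have edJ : dJ iv a b iv = cdf iv a b iv * cdf iv a b iv := by
        rw [cdf_sq iv a b ha hb iv le_rfl, dJ]
        ring
      rw [edJ]
      ring
  · -- subdiagonal iv = jv+1
    subst h
    have f1 : ¬(jv + 1 = jv) := by omega
    have f2 : ¬(jv + 1 + 1 = jv) := by omega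
    have f3 : ¬(jv = jv + 1) := by omega
    have f4 : ¬(jv + 1 = jv + 1 + 1) := by omega
    simp only [f1, f2, f3, f4, if_false, eq_self_iff_true, if_true, mul_zero, add_zero,
      zero_add, dite_eq_ite, ite_self]
    have e2 := cef_sq m jv (by omega)
    have e3 := cdf_sq m a b ha hb (jv+1) (by omega)
    have key : o2f m a b jv
        = (cef m jv * cef m jv) * (cdf m a b (jv+1) * cdf m a b (jv+1)) := by
      rw [e2, e3, o2f]
      push_cast
      ring
    rw [key, delta]
    ring
  · -- superdiagonal jv = iv+1
    subst h
    have f1 : ¬(iv = iv + 1) := by omega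
    have f2 : ¬(iv + 1 + 1 = iv) := by omega
    have f3 : ¬(iv + 1 + 1 = iv + 1) := by omega
    simp only [f1, f2, f3, if_false, eq_self_iff_true, if_true, mul_zero, add_zero,
      zero_add, dite_eq_ite, ite_self]
    rw [if_pos (show iv + 1 < m + 1 by omega), delta]
    ring
  · -- far apart
    have f1 : ¬(iv = jv) := by omega
    have f2 : ¬(iv + 1 = jv) := by omega
    have f3 : ¬(jv + 1 = iv) := by omega
    have f4 : ¬(jv + 1 = iv + 1) := by omega
    simp only [f1, f2, f3, f4, if_false, mul_zero, add_zero, zero_add, zero_mul,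
      dite_eq_ite, ite_self]


lemma det_CtC (m : ℕ) (a b : ℝ) (ha : -1 < a) (hb : -1 < b) (y : ℝ) :
    (y • (1 : Matrix (Fin (m+1)) (Fin (m+1)) ℝ) - (Cm m a b)ᵀ * Cm m a b).det
      = (y • 1 - Jm m a b).det := by
  have key : (y • 1 - Jm m a b) * dg m (delta m a b)
      = dg m (delta m a b) * (y • 1 - (Cm m a b)ᵀ * Cm m a b) := by
    rw [Matrix.sub_mul, Matrix.mul_sub, J_conj m a b ha hb]
    congr 1
    rw [Matrix.smul_mul, Matrix.mul_smul, Matrix.one_mul, Matrix.mul_one]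
  have hdet : (dg m (delta m a b)).det ≠ 0 := by
    rw [dg, Matrix.det_diagonal]
    apply Finset.prod_ne_zero_iff.mpr
    intro i _
    exact ne_of_gt (delta_pos m a b ha hb i (by omega))
  have := congrArg Matrix.det key
  rw [Matrix.det_mul, Matrix.det_mul] at this
  rw [mul_comm ((dg m (delta m a b)).det)] at this
  exact (mul_left_injective₀ hdet this).symm



def pe (m : ℕ) : Fin (m+1) ⊕ Fin (m+1) ≃ Fin (2*m+1+1) where
  toFun x := Sum.elim (fun (i : Fin (m+1)) => (⟨2*(i:ℕ), by have := i.isLt; omega⟩ : Fin (2*m+1+1)))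
    (fun (i : Fin (m+1)) => (⟨2*(i:ℕ)+1, by have := i.isLt; omega⟩ : Fin (2*m+1+1))) x
  invFun j := if (j:ℕ) % 2 = 0 then Sum.inl ⟨(j:ℕ)/2, by have := j.isLt; omega⟩
    else Sum.inr ⟨(j:ℕ)/2, by have := j.isLt; omega⟩
  left_inv x := by
    rcases x with i | i
    · dsimp only [Sum.elim_inl]
      rw [if_pos (by omega)]
      congr 1
      apply Fin.ext
      simp only [Fin.val_mk]
      omega
    · dsimp only [Sum.elim_inr]
      rw [if_neg (by omega)]
      congr 1
      apply Fin.ext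
      simp only [Fin.val_mk]
      omega
  right_inv j := by
    by_cases h : (j:ℕ) % 2 = 0
    · dsimp only
      rw [if_pos h]
      dsimp only [Sum.elim_inl]
      apply Fin.ext
      simp only [Fin.val_mk]
      omega
    · dsimp only
      rw [if_neg h]
      dsimp only [Sum.elim_inr]
      apply Fin.ext
      simp only [Fin.val_mk]
      omega

lemma symOdd_eq_cdf (m : ℕ) (a b : ℝ) (i : ℕ) :
    symEntryOdd (2*m+1) a b (2*i+1) = cdf m a b i := by
  rw [symEntryOdd, if_neg (by omega), cdf]
  congr 1
  push_cast
  ring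

lemma symOdd_eq_cef (m : ℕ) (a b : ℝ) (i : ℕ) :
    symEntryOdd (2*m+1) a b (2*i+1+1) = cef m i := by
  rw [symEntryOdd, if_pos (by omega), cef]
  congr 1
  push_cast
  ring

lemma hblock (m : ℕ) (a b x : ℝ) :
    (x • (1 : Matrix (Fin (2*m+1+1)) (Fin (2*m+1+1)) ℝ)
        - HsymOdd (2*m+1) a b).submatrix (pe m) (pe m)
      = Matrix.fromBlocks (x • 1) (-(Cm m a b)) (-(Cm m a b)ᵀ) (x • 1) := by
  ext i j
  rcases i with i | i <;> rcases j with j | j <;>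
    obtain ⟨iv, hiv⟩ := i <;> obtain ⟨jv, hjv⟩ := j <;>
    simp only [Matrix.submatrix_apply, Matrix.sub_apply, Matrix.smul_apply, Matrix.one_apply,
      smul_eq_mul, mul_ite, mul_one, mul_zero, Matrix.fromBlocks, Matrix.of_apply,
      Sum.elim_inl, Sum.elim_inr, pe, Equiv.coe_fn_mk, HsymOdd, Fin.mk.injEq, Fin.val_mk,
      Matrix.neg_apply, Matrix.transpose_apply, Cm, Matrix.add_apply, dg_apply, up_apply,
      lo_apply]
  · -- (even, even)
    have f1 : ¬(2*iv + 1 = 2*jv) := by omega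
    have f2 : ¬(2*jv + 1 = 2*iv) := by omega
    simp only [f1, f2, if_false, sub_zero]
    by_cases h : iv = jv
    · subst h
      rw [if_pos rfl, if_pos rfl]
    · rw [if_neg (by omega), if_neg h]
  · -- (even, odd)
    rw [if_neg (by omega : ¬(2*iv = 2*jv + 1)), zero_sub]
    by_cases h : iv = jv
    · subst h
      rw [if_pos rfl, if_pos rfl, if_neg (by omega), add_zero, symOdd_eq_cdf]
    · by_cases h2 : iv = jv + 1
      · subst h2
        rw [if_neg (by omega), if_pos (by omega), if_neg (by omega), if_pos rfl, zero_add,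
          symOdd_eq_cef]
      · rw [if_neg (by omega), if_neg (by omega), if_neg h, if_neg (by omega), add_zero,
          neg_zero]
  · -- (odd, even)
    rw [if_neg (by omega : ¬(2*iv + 1 = 2*jv)), zero_sub]
    by_cases h : jv = iv
    · subst h
      rw [if_neg (by omega), if_pos rfl, if_pos rfl, if_neg (by omega), add_zero, symOdd_eq_cdf]
    · by_cases h2 : jv = iv + 1
      · subst h2
        rw [if_pos (by omega), if_neg h, if_pos rfl, zero_add, symOdd_eq_cef]
      · rw [if_neg (by omega), if_neg (by omega), if_neg h, if_neg (by omega), add_zero,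
          neg_zero]
  · -- (odd, odd)
    have f1 : ¬(2*iv + 1 + 1 = 2*jv + 1) := by omega
    have f2 : ¬(2*jv + 1 + 1 = 2*iv + 1) := by omega
    simp only [f1, f2, if_false, sub_zero]
    by_cases h : iv = jv
    · subst h
      rw [if_pos rfl, if_pos rfl]
    · rw [if_neg (by omega), if_neg h]

lemma det_H_ne_zero (m : ℕ) (a b x : ℝ) (hx : x ≠ 0) :
    (x • (1 : Matrix (Fin (2*m+1+1)) (Fin (2*m+1+1)) ℝ) - HsymOdd (2*m+1) a b).det
      = ((x^2) • (1 : Matrix (Fin (m+1)) (Fin (m+1)) ℝ) - (Cm m a b)ᵀ * Cm m a b).det := by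
  letI hinst : Invertible (x • (1 : Matrix (Fin (m+1)) (Fin (m+1)) ℝ)) :=
    ⟨x⁻¹ • 1, by
        rw [Matrix.smul_mul, Matrix.mul_smul, Matrix.one_mul, smul_smul,
          inv_mul_cancel₀ hx, one_smul], by
        rw [Matrix.smul_mul, Matrix.mul_smul, Matrix.one_mul, smul_smul,
          mul_inv_cancel₀ hx, one_smul]⟩
  have hinvOf : ⅟(x • (1 : Matrix (Fin (m+1)) (Fin (m+1)) ℝ)) = x⁻¹ • 1 := rfl
  rw [← Matrix.det_submatrix_equiv_self (pe m), hblock, Matrix.det_fromBlocks₁₁, hinvOf]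
  have hmid : x • (1 : Matrix (Fin (m+1)) (Fin (m+1)) ℝ)
      - (-(Cm m a b)ᵀ) * (x⁻¹ • 1) * (-(Cm m a b))
      = x • 1 - x⁻¹ • ((Cm m a b)ᵀ * Cm m a b) := by
    congr 1
    rw [Matrix.mul_smul, Matrix.mul_one, Matrix.smul_mul, Matrix.neg_mul, Matrix.mul_neg,
      neg_neg]
  rw [hmid]
  have hfac : (x^2) • (1 : Matrix (Fin (m+1)) (Fin (m+1)) ℝ) - (Cm m a b)ᵀ * Cm m a b
      = x • (x • 1 - x⁻¹ • ((Cm m a b)ᵀ * Cm m a b)) := by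
    rw [smul_sub, smul_smul, smul_smul, mul_inv_cancel₀ hx, one_smul, sq]
  rw [hfac, Matrix.det_smul, Matrix.det_smul, Matrix.det_one, mul_one, Fintype.card_fin]

lemma det_H_all (m : ℕ) (a b : ℝ) (ha : -1 < a) (hb : -1 < b) (x : ℝ) :
    (x • (1 : Matrix (Fin (2*m+1+1)) (Fin (2*m+1+1)) ℝ) - HsymOdd (2*m+1) a b).det
      = ∏ k ∈ Finset.range (m+1), (x^2 - (2*(k:ℝ)+1+a) * (2*(k:ℝ)+1+b)) := by
  have hcont1 : Continuous fun x : ℝ =>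
      (x • (1 : Matrix (Fin (2*m+1+1)) (Fin (2*m+1+1)) ℝ) - HsymOdd (2*m+1) a b).det :=
    Continuous.matrix_det ((continuous_id.smul continuous_const).sub continuous_const)
  have hcont2 : Continuous fun x : ℝ =>
      ∏ k ∈ Finset.range (m+1), (x^2 - (2*(k:ℝ)+1+a) * (2*(k:ℝ)+1+b)) := by
    apply continuous_finset_prod
    intro k _
    exact (continuous_pow 2).sub continuous_const
  have heq := Continuous.ext_on (dense_compl_singleton (0:ℝ)) hcont1 hcont2 ?_
  · exact congrFun heq x
  · intro y hy
    have hy' : y ≠ 0 := hy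
    show (y • 1 - HsymOdd (2*m+1) a b).det = _
    rw [det_H_ne_zero m a b y hy', det_CtC m a b ha hb, det_Jm]

end HOddProof

/-- for `n = 2m+1` odd and `a, b > -1`, the symmetric tridiagonal matrix
`Ĥ_n(a,b)` has eigenvalues `±√((2k+1+a)(2k+1+b))` for `k = 0, ..., m`. -/
theorem HsymOdd_spectrum (m : ℕ) (a b : ℝ) (ha : -1 < a) (hb : -1 < b) :
    spectrum ℝ (HsymOdd (2 * m + 1) a b)
      = {x : ℝ | ∃ k ∈ Finset.range (m + 1),
          x = Real.sqrt ((2 * (k : ℝ) + 1 + a) * (2 * (k : ℝ) + 1 + b))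
            ∨ x = -Real.sqrt ((2 * (k : ℝ) + 1 + a) * (2 * (k : ℝ) + 1 + b))} := by
  ext x
  simp only [Set.mem_setOf_eq]
  rw [spectrum.mem_iff, Algebra.algebraMap_eq_smul_one, Matrix.isUnit_iff_isUnit_det,
    isUnit_iff_ne_zero, not_ne_iff, HOddProof.det_H_all m a b ha hb x,
    Finset.prod_eq_zero_iff]
  constructor
  · rintro ⟨k, hk, hzero⟩
    refine ⟨k, hk, ?_⟩
    have hk0 : (0:ℝ) ≤ (k:ℝ) := by positivity
    have hl : 0 ≤ (2*(k:ℝ)+1+a) * (2*(k:ℝ)+1+b) := by nlinarith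
    have h2 : x^2 = Real.sqrt ((2*(k:ℝ)+1+a) * (2*(k:ℝ)+1+b)) ^ 2 := by
      rw [Real.sq_sqrt hl]
      linarith [hzero]
    exact (Commute.all x _).sq_eq_sq_iff_eq_or_eq_neg.mp h2
  · rintro ⟨k, hk, h | h⟩ <;> refine ⟨k, hk, ?_⟩ <;> subst h
    · have hk0 : (0:ℝ) ≤ (k:ℝ) := by positivity
      have hl : 0 ≤ (2*(k:ℝ)+1+a) * (2*(k:ℝ)+1+b) := by nlinarith
      rw [Real.sq_sqrt hl, sub_self]
    · have hk0 : (0:ℝ) ≤ (k:ℝ) := by positivity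
      have hl : 0 ≤ (2*(k:ℝ)+1+a) * (2*(k:ℝ)+1+b) := by nlinarith
      rw [neg_pow, Real.sq_sqrt hl]
      norm_num
end

section
/- For n = 2m even, the vector U_0 with odd-indexed entries u_{2j+1} = (-1)^j · R_j(λ(0); (a-1)/2, (b-1)/2, m) (dual Hahn polynomial values, up to normalization) and even-indexed entries zero is an eigenvector of H_n(a,b) with eigenvalue 0. -/
/-- for `n = 2m` even, the vector `U₀` whose (1-based) odd entries are
`u_{2j+1} = (-1)^j · w_j` (the dual Hahn polynomial values at `λ(0)` up to the
positive normalization constants `w_j`) and whose even entries are zero, is an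
eigenvector of `H_n(a,b)` with eigenvalue `0`. -/
theorem Hmat_even_kernel_vector (m : ℕ) (a b : ℝ) :
    ∃ w : Fin (m + 1) → ℝ, (∀ j, 0 < w j) ∧
      (Hmat (2 * m) a b).mulVec
        (fun i : Fin (2 * m + 1) =>
          if (i : ℕ) % 2 = 1 then 0
          else (-1 : ℝ) ^ ((i : ℕ) / 2) * w ⟨(i : ℕ) / 2, by have := i.isLt; omega⟩)
        = 0 := by
  refine ⟨fun j => (m.choose (j : ℕ) : ℝ), fun j => ?_, ?_⟩
  · show (0 : ℝ) < (m.choose (j : ℕ) : ℝ)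
    exact_mod_cast Nat.choose_pos (by have := j.isLt; omega : (j : ℕ) ≤ m)
  funext i
  simp only [Matrix.mulVec, dotProduct, Pi.zero_apply]
  set v : Fin (2 * m + 1) → ℝ := fun i : Fin (2 * m + 1) =>
          if (i : ℕ) % 2 = 1 then 0
          else (-1 : ℝ) ^ ((i : ℕ) / 2) * ((m.choose ((i : ℕ) / 2) : ℝ)) with hv
  rcases Nat.even_or_odd (i : ℕ) with he | ho
  · -- even row: every term vanishes
    have he' : (i : ℕ) % 2 = 0 := Nat.even_iff.mp he
    apply Finset.sum_eq_zero
    intro j _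
    rcases Nat.even_or_odd (j : ℕ) with hje | hjo
    · have hje' : (j : ℕ) % 2 = 0 := Nat.even_iff.mp hje
      have h1 : ¬ ((i : ℕ) + 1 = (j : ℕ)) := by omega
      have h2 : ¬ ((j : ℕ) + 1 = (i : ℕ)) := by omega
      simp [Hmat, h1, h2]
    · have : (j : ℕ) % 2 = 1 := Nat.odd_iff.mp hjo
      simp [hv, this]
  · -- odd row
    obtain ⟨t, ht⟩ := ho
    have hi2m : (i : ℕ) < 2 * m := by have := i.isLt; omega
    set j1 : Fin (2 * m + 1) := ⟨(i : ℕ) - 1, by omega⟩ with hj1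
    set j2 : Fin (2 * m + 1) := ⟨(i : ℕ) + 1, by omega⟩ with hj2
    have hne : j1 ≠ j2 := Fin.ne_of_val_ne (by simp only [hj1, hj2]; omega)
    have hzero : ∀ j ∈ Finset.univ, j ∉ ({j1, j2} : Finset (Fin (2 * m + 1))) →
        Hmat (2 * m) a b i j * v j = 0 := by
      intro j _ hj
      simp only [Finset.mem_insert, Finset.mem_singleton, not_or, Fin.ext_iff, hj1, hj2] at hj
      have h1 : ¬ ((i : ℕ) + 1 = (j : ℕ)) := by omega
      have h2 : ¬ ((j : ℕ) + 1 = (i : ℕ)) := by omega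
      simp [Hmat, h1, h2]
    rw [← Finset.sum_subset (Finset.subset_univ {j1, j2}) hzero, Finset.sum_pair hne]
    have hv1 : v j1 = (-1 : ℝ) ^ t * (m.choose t : ℝ) := by
      have hmod : ((j1 : ℕ)) % 2 = 0 := by simp only [hj1]; omega
      have hd : ((j1 : ℕ)) / 2 = t := by simp only [hj1]; omega
      simp only [hv, hmod, hd]; norm_num
    have hv2 : v j2 = (-1 : ℝ) ^ (t + 1) * (m.choose (t + 1) : ℝ) := by
      have hmod : ((j2 : ℕ)) % 2 = 0 := by simp only [hj2]; omega
      have hd : ((j2 : ℕ)) / 2 = t + 1 := by simp only [hj2]; omega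
      simp only [hv, hmod, hd]; norm_num
    have hH1 : Hmat (2 * m) a b i j1 = ((2 * m - 2 * t : ℕ) : ℝ) := by
      have h1 : ¬ ((i : ℕ) + 1 = (j1 : ℕ)) := by simp only [hj1]; omega
      have h2 : ((j1 : ℕ)) + 1 = (i : ℕ) := by simp only [hj1]; omega
      have h3 : (2 * m - (j1 : ℕ)) % 2 = 0 := by simp only [hj1]; omega
      have h4 : 2 * m - (j1 : ℕ) = 2 * m - 2 * t := by simp only [hj1]; omega
      simp only [Hmat, Matrix.of_apply]
      rw [if_neg h1, if_pos h2, if_pos h3, h4]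
    have hH2 : Hmat (2 * m) a b i j2 = ((i : ℕ) + 1 : ℝ) := by
      have h1 : (i : ℕ) + 1 = (j2 : ℕ) := by simp only [hj2]
      have h3 : ((i : ℕ) + 1) % 2 = 0 := by omega
      simp only [Hmat, Matrix.of_apply]
      simp only [hj2, if_pos h3, if_true]
    rw [hv1, hv2, hH1, hH2]
    have ht' : t < m := by omega
    have hrec : (m.choose (t + 1) : ℝ) * (t + 1) = (m.choose t : ℝ) * ((m : ℝ) - t) := by
      have h := Nat.choose_succ_right_eq m t
      calc (m.choose (t + 1) : ℝ) * (t + 1)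
          = ((m.choose (t + 1) * (t + 1) : ℕ) : ℝ) := by push_cast; ring
        _ = ((m.choose t * (m - t) : ℕ) : ℝ) := by rw [h]
        _ = (m.choose t : ℝ) * ((m : ℝ) - t) := by
            push_cast [Nat.cast_sub ht'.le]; ring
    have hcast : ((2 * m - 2 * t : ℕ) : ℝ) = 2 * (m : ℝ) - 2 * t := by
      push_cast [Nat.cast_sub (by omega : 2 * t ≤ 2 * m)]; ring
    rw [hcast, ht]
    push_cast
    linear_combination (-2 * (-1 : ℝ) ^ t) * hrec
end

section
/- For n = 2m+1 odd, det H_n(a,b) = (-1)^{m+1} ∏_{k=0}^{m} (2k+1+a)(2k+1+b). -/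
open Finset

section Tridiagonal

variable {R : Type*} [CommRing R]

def tridiagZeroDiag (N : ℕ) (u v : ℕ → R) : Matrix (Fin N) (Fin N) R :=
  Matrix.of fun i j => if (i : ℕ) + 1 = j then u i else if (j : ℕ) + 1 = i then v j else 0

lemma tridiagZeroDiag_submatrix_succ_succ (N : ℕ) (u v : ℕ → R) :
    ((tridiagZeroDiag (N + 2) u v).submatrix (Fin.succAbove 1) Fin.succ).submatrix
        Fin.succ (Fin.succAbove 0)
      = tridiagZeroDiag N (fun k => u (k + 2)) (fun k => v (k + 2)) := by
  ext i j
  have hi : (1 : Fin (N + 2)).succAbove i.succ = i.succ.succ := Fin.succ_succAbove_succ 0 i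
  simp only [Matrix.submatrix_apply, Fin.succAbove_zero, hi, tridiagZeroDiag, Matrix.of_apply,
    Fin.val_succ]
  split_ifs <;> first | rfl | omega

lemma det_tridiagZeroDiag_add_two (N : ℕ) (u v : ℕ → R) :
    (tridiagZeroDiag (N + 2) u v).det
      = -(u 0 * v 0) * (tridiagZeroDiag N (fun k => u (k + 2)) (fun k => v (k + 2))).det := by
  set T := tridiagZeroDiag (N + 2) u v
  -- expand along column 0, whose only nonzero entry is `T 1 0 = v 0`
  have hcol : ∀ i : Fin (N + 2), i ≠ 1 → T i 0 = 0 := by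
    intro i hi
    have : 1 ≠ (i : ℕ) := fun h => hi (Fin.ext h.symm)
    simp [T, tridiagZeroDiag, this]
  -- then along row 0 of the minor, whose only nonzero entry is `T 0 1 = u 0`
  have hrow : ∀ j : Fin (N + 1), j ≠ 0 → T 0 j.succ = 0 := by
    intro j hj
    simp [T, tridiagZeroDiag, hj]
  rw [Matrix.det_succ_column_zero, Fintype.sum_eq_single 1 (fun i hi => by rw [hcol i hi]; ring),
    Matrix.det_succ_row_zero, Fintype.sum_eq_single 0 (fun j hj => by simp [hrow j hj]),
    tridiagZeroDiag_submatrix_succ_succ]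
  simp [T, tridiagZeroDiag]
  ring

lemma det_tridiagZeroDiag_two_mul (n : ℕ) (u v : ℕ → R) :
    (tridiagZeroDiag (2 * n) u v).det = (-1) ^ n * ∏ k ∈ range n, u (2 * k) * v (2 * k) := by
  induction n generalizing u v with
  | zero => simp [Matrix.det_fin_zero]
  | succ n ih =>
    rw [show 2 * (n + 1) = 2 * n + 2 by ring, det_tridiagZeroDiag_add_two, ih, prod_range_succ']
    simp only [mul_add, mul_zero]
    ring

end Tridiagonal

/-- for `n = 2m+1` odd,
`det H_n(a,b) = (-1)^(m+1) ∏_{k=0}^m (2k+1+a)(2k+1+b)`. -/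
theorem Hmat_odd_det (m : ℕ) (a b : ℝ) :
    (Hmat (2 * m + 1) a b).det
      = (-1 : ℝ) ^ (m + 1)
          * ∏ k ∈ Finset.range (m + 1),
              (2 * (k : ℝ) + 1 + a) * (2 * (k : ℝ) + 1 + b) := by
  have hH : Hmat (2 * m + 1) a b = tridiagZeroDiag (2 * (m + 1))
      (fun k => if (k + 1) % 2 = 0 then (k + 1 : ℝ) else (k + 1 : ℝ) + a)
      (fun k => if (2 * m + 1 - k) % 2 = 0 then ((2 * m + 1 - k : ℕ) : ℝ)
        else ((2 * m + 1 - k : ℕ) : ℝ) + b) := rfl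
  rw [hH, det_tridiagZeroDiag_two_mul, prod_mul_distrib, prod_mul_distrib,
    ← prod_range_reflect (fun k : ℕ => 2 * (k : ℝ) + 1 + b)]
  congr 2 <;> refine prod_congr rfl fun k hk => ?_
  · rw [if_neg (by omega)]
    push_cast
    ring
  · have hk : k ≤ m := Nat.lt_succ_iff.mp (mem_range.mp hk)
    rw [if_neg (by omega), show 2 * m + 1 - 2 * k = 2 * (m + 1 - 1 - k) + 1 by omega]
    push_cast
    ring
end

section
/- For n = 2m even and a + b > -2, the matrix H_n(a,b) has n+1 distinct real eigenvalues. -/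
open Polynomial Matrix

variable {R : Type*} [CommRing R]

/-- generic tridiagonal matrix built from sequences. -/
def triM (d u l : ℕ → R) (n : ℕ) : Matrix (Fin n) (Fin n) R :=
  Matrix.of fun i j =>
    if (i : ℕ) = j then d i
    else if (i : ℕ) + 1 = j then u i
    else if (j : ℕ) + 1 = i then l j
    else 0

theorem triM_shift_one (d u l : ℕ → R) (n : ℕ) :
    (triM d u l (n+1)).submatrix (Fin.succ : Fin n → Fin (n+1)) Fin.succ
      = triM (fun i => d (i+1)) (fun i => u (i+1)) (fun i => l (i+1)) n := by
  ext i j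
  simp only [Matrix.submatrix_apply, triM, Matrix.of_apply, Fin.val_succ]
  have h1 : ((i:ℕ) + 1 = (j:ℕ) + 1) ↔ ((i:ℕ) = j) := by omega
  have h2 : ((i:ℕ) + 1 + 1 = (j:ℕ) + 1) ↔ ((i:ℕ) + 1 = j) := by omega
  have h3 : ((j:ℕ) + 1 + 1 = (i:ℕ) + 1) ↔ ((j:ℕ) + 1 = i) := by omega
  simp only [h1, h2, h3]

theorem triM_det_rec (d u l : ℕ → R) (n : ℕ) :
    (triM d u l (n + 2)).det =
      d 0 * (triM (fun i => d (i+1)) (fun i => u (i+1)) (fun i => l (i+1)) (n+1)).det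
      - u 0 * l 0 * (triM (fun i => d (i+2)) (fun i => u (i+2)) (fun i => l (i+2)) n).det := by
  rw [Matrix.det_succ_column_zero, Fin.sum_univ_succ, Fin.sum_univ_succ]
  have h0 : ∀ i : Fin n, (triM d u l (n+2)) i.succ.succ 0 = 0 := by
    intro i
    simp only [triM, Matrix.of_apply, Fin.val_succ, Fin.val_zero]
    norm_num
  have hsum : ∑ i : Fin n,
      (-1) ^ ((i.succ.succ : Fin (n+2)) : ℕ) * triM d u l (n + 2) i.succ.succ 0 *
        ((triM d u l (n + 2)).submatrix i.succ.succ.succAbove Fin.succ).det = 0 := by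
    apply Finset.sum_eq_zero
    intro i _
    rw [h0]; ring
  rw [hsum]
  -- first term
  have e0 : (Fin.succAbove (0 : Fin (n+2))) = (Fin.succ : Fin (n+1) → Fin (n+2)) :=
    Fin.succAbove_zero
  have t0 : (triM d u l (n+2)) 0 0 = d 0 := by
    simp [triM]
  have t1 : (triM d u l (n+2)) (Fin.succ 0) 0 = l 0 := by
    simp [triM]
  rw [e0, t0, t1, triM_shift_one]
  -- second term: expand the (n+1)×(n+1) submatrix along its first row
  set B := (triM d u l (n + 2)).submatrix (Fin.succ (0 : Fin (n+1))).succAbove Fin.succ with hB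
  have hB00 : B 0 0 = u 0 := by
    simp only [hB, Matrix.submatrix_apply]
    have : (Fin.succ (0 : Fin (n+1))).succAbove 0 = 0 := rfl
    rw [this]
    simp [triM]
  have hB0succ : ∀ j : Fin n, B 0 j.succ = 0 := by
    intro j
    simp only [hB, Matrix.submatrix_apply]
    have : (Fin.succ (0 : Fin (n+1))).succAbove 0 = 0 := rfl
    rw [this]
    simp only [triM, Matrix.of_apply, Fin.val_zero, Fin.val_succ]
    norm_num
  have hBdet : B.det = u 0 *
      (triM (fun i => d (i+2)) (fun i => u (i+2)) (fun i => l (i+2)) n).det := by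
    rw [Matrix.det_succ_row_zero, Fin.sum_univ_succ]
    have hrest : ∑ j : Fin n,
        (-1) ^ ((j.succ : Fin (n+1)) : ℕ) * B 0 j.succ *
          (B.submatrix Fin.succ j.succ.succAbove).det = 0 := by
      apply Finset.sum_eq_zero
      intro j _
      rw [hB0succ]; ring
    rw [hrest, hB00]
    have hsub : B.submatrix (Fin.succ : Fin n → Fin (n+1)) (Fin.succ : Fin n → Fin (n+1))
        = triM (fun i => d (i+2)) (fun i => u (i+2)) (fun i => l (i+2)) n := by
      ext i j
      simp only [hB, Matrix.submatrix_apply]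
      have hrow : (Fin.succ (0 : Fin (n+1))).succAbove i.succ = i.succ.succ := rfl
      rw [hrow]
      simp only [triM, Matrix.of_apply, Fin.val_succ]
      have h1 : ((i:ℕ) + 1 + 1 = (j:ℕ) + 1 + 1) ↔ ((i:ℕ) = j) := by omega
      have h2 : ((i:ℕ) + 1 + 1 + 1 = (j:ℕ) + 1 + 1) ↔ ((i:ℕ) + 1 = j) := by omega
      have h3 : ((j:ℕ) + 1 + 1 + 1 = (i:ℕ) + 1 + 1) ↔ ((j:ℕ) + 1 = i) := by omega
      simp only [h1, h2, h3]
    rw [Fin.succAbove_zero, hsub]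
    simp
  rw [hBdet]
  simp [Fin.val_succ]
  ring

noncomputable def ssup (a : ℝ) (i : ℕ) : ℝ := if (i+1) % 2 = 0 then (i+1 : ℝ) else (i+1 : ℝ) + a
noncomputable def ssub (n : ℕ) (b : ℝ) (j : ℕ) : ℝ :=
  if (n-j) % 2 = 0 then ((n-j : ℕ) : ℝ) else ((n-j : ℕ) : ℝ) + b

noncomputable def FF (n : ℕ) (a b : ℝ) (k : ℕ) : ℝ[X] :=
  (triM (fun _ => (X : ℝ[X])) (fun i => -C (ssup a (k+i))) (fun j => -C (ssub n b (k+j)))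
    (n+1-k)).det

theorem charpoly_Hmat (n : ℕ) (a b : ℝ) : (Hmat n a b).charpoly = FF n a b 0 := by
  have hm : charmatrix (Hmat n a b) =
      triM (fun _ => (X:ℝ[X])) (fun i => -C (ssup a (0+i))) (fun j => -C (ssub n b (0+j))) (n+1) := by
    ext i j
    by_cases hij : i = j
    · subst hij
      rw [charmatrix_apply_eq]
      simp only [triM, Matrix.of_apply, if_pos rfl, Hmat, Matrix.of_apply]
      have h1 : ¬((i:ℕ) + 1 = (i:ℕ)) := by omega
      simp [h1]
    · rw [charmatrix_apply_ne _ _ _ hij]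
      have hij' : ¬((i:ℕ) = (j:ℕ)) := fun h => hij (Fin.ext h)
      simp only [triM, Matrix.of_apply, if_neg hij', Hmat, Matrix.of_apply, ssup, ssub,
        Nat.zero_add]
      by_cases h2 : (i:ℕ) + 1 = (j:ℕ)
      · simp [h2]
      · simp only [if_neg h2]
        by_cases h3 : (j:ℕ) + 1 = (i:ℕ)
        · simp [h3]
        · simp [h2, h3]
  rw [Matrix.charpoly, hm, FF]
  congr 1

theorem FF_last (n : ℕ) (a b : ℝ) : FF n a b n = X := by
  have h : n + 1 - n = 1 := by omega
  rw [FF, h, Matrix.det_fin_one]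
  simp [triM]

theorem FF_zero_size (n : ℕ) (a b : ℝ) : FF n a b (n+1) = 1 := by
  have h : n + 1 - (n+1) = 0 := by omega
  rw [FF, h, Matrix.det_fin_zero]

theorem FF_rec (n : ℕ) (a b : ℝ) (k : ℕ) (hk : k + 2 ≤ n + 1) :
    FF n a b k = X * FF n a b (k+1) - C (ssup a k * ssub n b k) * FF n a b (k+2) := by
  have h : n + 1 - k = (n - 1 - k) + 2 := by omega
  have h1 : n + 1 - (k+1) = (n - 1 - k) + 1 := by omega
  have h2 : n + 1 - (k+2) = n - 1 - k := by omega
  rw [FF, h, triM_det_rec]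
  rw [FF, h1, FF, h2]
  have e1 : (fun i => -C (ssup a (k+(i+1)))) = (fun i => -C (ssup a ((k+1)+i))) := by
    funext i; rw [show k+(i+1) = (k+1)+i by omega]
  have e2 : (fun j => -C (ssub n b (k+(j+1)))) = (fun j => -C (ssub n b ((k+1)+j))) := by
    funext j; rw [show k+(j+1) = (k+1)+j by omega]
  have e3 : (fun i => -C (ssup a (k+(i+2)))) = (fun i => -C (ssup a ((k+2)+i))) := by
    funext i; rw [show k+(i+2) = (k+2)+i by omega]
  have e4 : (fun j => -C (ssub n b (k+(j+2)))) = (fun j => -C (ssub n b ((k+2)+j))) := by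
    funext j; rw [show k+(j+2) = (k+2)+j by omega]
  rw [e1, e2, e3, e4]
  simp only [Nat.add_zero]
  rw [neg_mul_neg, ← C_mul]

open Polynomial Finset

noncomputable def fallR (x : ℝ) (s : ℕ) : ℝ := ∏ i ∈ Finset.range s, (x - i)
noncomputable def rhoR (y : ℝ) (s : ℕ) : ℝ := ∏ i ∈ Finset.range s, (y + 2*i)
noncomputable def betaR (z : ℝ) (s : ℕ) : ℝ := ∏ i ∈ Finset.range s, (z - 2*i)

theorem fallR_succ (x : ℝ) (s : ℕ) : fallR x (s+1) = fallR x s * (x - s) :=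
  Finset.prod_range_succ _ _

theorem fallR_succ' (x : ℝ) (s : ℕ) : fallR x (s+1) = fallR (x-1) s * x := by
  rw [fallR, Finset.prod_range_succ']
  simp only [Nat.cast_zero, sub_zero]
  congr 1
  apply Finset.prod_congr rfl
  intro i _
  push_cast
  ring

theorem rhoR_succ (y : ℝ) (s : ℕ) : rhoR y (s+1) = rhoR y s * (y + 2*s) :=
  Finset.prod_range_succ _ _

theorem rhoR_succ' (y : ℝ) (s : ℕ) : rhoR y (s+1) = rhoR (y+2) s * y := by
  rw [rhoR, Finset.prod_range_succ']
  simp only [Nat.cast_zero, mul_zero, add_zero]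
  congr 1
  apply Finset.prod_congr rfl
  intro i _
  push_cast
  ring

theorem betaR_succ (z : ℝ) (s : ℕ) : betaR z (s+1) = betaR z s * (z - 2*s) :=
  Finset.prod_range_succ _ _

theorem betaR_succ' (z : ℝ) (s : ℕ) : betaR z (s+1) = betaR (z-2) s * z := by
  rw [betaR, Finset.prod_range_succ']
  simp only [Nat.cast_zero, mul_zero, sub_zero]
  congr 1
  apply Finset.prod_congr rfl
  intro i _
  push_cast
  ring

noncomputable def lamv (a b : ℝ) (r : ℕ) : ℝ := 2*r*(2*r+a+b)

noncomputable def gco (n : ℕ) (b : ℝ) (j s : ℕ) : ℝ :=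
  (-1)^s * fallR (j : ℝ) s * rhoR ((n:ℝ) - 2*j) s * betaR (b + 2*j + 1) s / (Nat.factorial s)

theorem gco_zero (n : ℕ) (b : ℝ) (j : ℕ) : gco n b j 0 = 1 := by
  simp [gco, fallR, rhoR, betaR]

theorem gco_vanish (n : ℕ) (b : ℝ) (j s : ℕ) (h : j < s) : gco n b j s = 0 := by
  have : fallR (j : ℝ) s = 0 := by
    apply Finset.prod_eq_zero (Finset.mem_range.mpr h)
    simp
  simp [gco, this]

theorem gco_top (m : ℕ) (b : ℝ) (s : ℕ) : gco (2*m) b m (s+1) = 0 := by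
  have h0 : rhoR (0:ℝ) (s+1) = 0 := by
    apply Finset.prod_eq_zero (Finset.mem_range.mpr (Nat.succ_pos s))
    norm_num
  have h1 : ((2*m : ℕ) : ℝ) - 2*(m:ℝ) = 0 := by push_cast; ring
  rw [gco, h1, h0]
  simp

theorem gco_id (n : ℕ) (a b : ℝ) (J s : ℕ) (hJ : 1 ≤ J) (hs : s ≤ J) :
    gco n b (J+1) (s+1) =
      gco n b J (s+1)
      + (lamv a b (J+1-s)
          - (((n:ℝ) - 2*J)*(2*J+1+b) + (2*J+2)*((n:ℝ)-2*J-1+a))) * gco n b J s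
      - (if s = 0 then 0 else
          ((n:ℝ)-2*J)*(2*J+1+b)*(2*J)*((n:ℝ)-2*J+1+a) * gco n b (J-1) (s-1)) := by
  have hfac : (Nat.factorial s : ℝ) ≠ 0 := by
    exact_mod_cast (Nat.factorial_pos s).ne'
  have gco_one : ∀ (j : ℕ), gco n b j 1 = -((j:ℝ) * ((n:ℝ) - 2*j) * (b + 2*j + 1)) := by
    intro j
    simp only [gco, fallR, rhoR, betaR, Finset.prod_range_one, Nat.factorial_one,
      Nat.cast_zero, Nat.cast_one, mul_zero, sub_zero, add_zero, pow_one]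
    ring
  rcases Nat.eq_zero_or_pos s with hs0 | hs1
  · subst hs0
    simp only [if_pos rfl, Nat.add_sub_cancel, sub_zero]
    rw [gco_one, gco_one, gco_zero, lamv]
    push_cast
    ring
  · obtain ⟨t, rfl⟩ : ∃ t, s = t + 1 := ⟨s - 1, by omega⟩
    have htJ : t + 1 ≤ J := hs
    rw [if_neg (by omega : ¬ t + 1 = 0)]
    have hJt : (((J : ℕ) - t : ℕ) : ℝ) = (J : ℝ) - t := by
      push_cast [Nat.cast_sub (by omega : t ≤ J)]; ring
    have hJ1 : (((J : ℕ) - 1 : ℕ) : ℝ) = (J : ℝ) - 1 := by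
      push_cast [Nat.cast_sub hJ]; ring
    have e1 : J + 1 - (t + 1) = J - t := by omega
    have e2 : t + 1 - 1 = t := rfl
    rw [e1, e2]
    -- expand all gco's into core products with head factors
    set P := fallR ((J:ℝ) - 1) t with hP
    set Q := rhoR ((n:ℝ) - 2*J + 2) t with hQ
    set R := betaR (b + 2*J - 1) t with hR
    have f1 : fallR ((J:ℝ)+1) (t+2) = P * ((J:ℝ)) * ((J:ℝ)+1) := by
      rw [fallR_succ', show (J:ℝ)+1-1 = (J:ℝ) by ring, fallR_succ']
    have f2 : fallR ((J:ℝ)) (t+2) = P * (J:ℝ) * ((J:ℝ) - (t+1)) := by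
      rw [fallR_succ, fallR_succ']
      push_cast; ring
    have f3 : fallR ((J:ℝ)) (t+1) = P * (J:ℝ) := by
      rw [fallR_succ']
    have r1 : rhoR ((n:ℝ) - 2*((J:ℝ)+1)) (t+2)
        = Q * ((n:ℝ)-2*J) * ((n:ℝ)-2*J-2) := by
      rw [show (n:ℝ) - 2*((J:ℝ)+1) = ((n:ℝ) - 2*J - 2) by ring, rhoR_succ',
        show (n:ℝ) - 2*(J:ℝ) - 2 + 2 = (n:ℝ) - 2*J by ring, rhoR_succ']
    have r2 : rhoR ((n:ℝ) - 2*(J:ℝ)) (t+2) = Q * ((n:ℝ)-2*J) * ((n:ℝ)-2*J+2*(t+1)) := by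
      rw [rhoR_succ, rhoR_succ']
      push_cast; ring
    have r3 : rhoR ((n:ℝ) - 2*(J:ℝ)) (t+1) = Q * ((n:ℝ)-2*J) := by
      rw [rhoR_succ']
    have b1 : betaR (b + 2*((J:ℝ)+1) + 1) (t+2) = R * (b+2*J+1) * (b+2*J+3) := by
      rw [show b + 2*((J:ℝ)+1) + 1 = (b + 2*(J:ℝ) + 3) by ring, betaR_succ',
        show b + 2*(J:ℝ) + 3 - 2 = b + 2*(J:ℝ) + 1 by ring, betaR_succ',
        show b + 2*(J:ℝ) + 1 - 2 = b + 2*(J:ℝ) - 1 by ring]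
    have b2 : betaR (b + 2*(J:ℝ) + 1) (t+2) = R * (b+2*J+1) * (b+2*J+1-2*(t+1)) := by
      rw [betaR_succ, betaR_succ', show b + 2*(J:ℝ) + 1 - 2 = b + 2*(J:ℝ) - 1 by ring]
      push_cast; ring
    have b3 : betaR (b + 2*(J:ℝ) + 1) (t+1) = R * (b+2*J+1) := by
      rw [betaR_succ', show b + 2*(J:ℝ) + 1 - 2 = b + 2*(J:ℝ) - 1 by ring]
    rw [gco, gco, gco, gco]
    push_cast [hJ1]
    rw [show (n:ℝ) - 2*((J:ℝ) - 1) = (n:ℝ) - 2*J + 2 by ring,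
      show b + 2*((J:ℝ)-1) + 1 = b + 2*(J:ℝ) - 1 by ring]
    rw [f1, f2, f3, r1, r2, r3, b1, b2, b3, ← hP, ← hQ, ← hR]
    rw [lamv, hJt]
    have hfact2 : ((Nat.factorial (t+2) : ℕ) : ℝ) = ((t:ℝ)+2) * ((t:ℝ)+1) * (Nat.factorial t : ℝ) := by
      rw [Nat.factorial_succ, Nat.factorial_succ]
      push_cast; ring
    have hfact1 : ((Nat.factorial (t+1) : ℕ) : ℝ) = ((t:ℝ)+1) * (Nat.factorial t : ℝ) := by
      rw [Nat.factorial_succ]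
      push_cast; ring
    rw [hfact2, hfact1]
    have hfacT : (Nat.factorial t : ℝ) ≠ 0 := by
      exact_mod_cast (Nat.factorial_pos t).ne'
    have h1 : ((t:ℝ)+1) ≠ 0 := by positivity
    have h2 : ((t:ℝ)+2) ≠ 0 := by positivity
    field_simp
    ring

noncomputable def phiP (a b : ℝ) (r : ℕ) : ℝ[X] :=
  ∏ i ∈ Finset.range r, (X^2 - C (lamv a b (i+1)))

theorem phiP_succ (a b : ℝ) (r : ℕ) :
    phiP a b (r+1) = phiP a b r * (X^2 - C (lamv a b (r+1))) :=
  Finset.prod_range_succ _ _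

theorem X_sq_mul_phiP (a b : ℝ) (r : ℕ) :
    X^2 * phiP a b r = phiP a b (r+1) + C (lamv a b (r+1)) * phiP a b r := by
  rw [phiP_succ]; ring

noncomputable def SP (n : ℕ) (a b : ℝ) (j : ℕ) : ℝ[X] :=
  ∑ s ∈ Finset.range (j+1), C (gco n b j s) * phiP a b (j - s)

theorem SP_rec (n : ℕ) (a b : ℝ) (J : ℕ) (hJ : 1 ≤ J) :
    SP n a b (J+1) =
      (X^2 - C (((n:ℝ) - 2*J)*(2*J+1+b) + (2*J+2)*((n:ℝ)-2*J-1+a))) * SP n a b J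
      - C (((n:ℝ)-2*J)*(2*J+1+b)*(2*J)*((n:ℝ)-2*J+1+a)) * SP n a b (J-1) := by
  set A : ℝ := ((n:ℝ) - 2*J)*(2*J+1+b) + (2*J+2)*((n:ℝ)-2*J-1+a) with hA
  set B : ℝ := ((n:ℝ)-2*J)*(2*J+1+b)*(2*J)*((n:ℝ)-2*J+1+a) with hB
  -- step 1
  have step1 : (X^2 - C A) * SP n a b J
      = ∑ s ∈ Finset.range (J+1),
          (C (gco n b J s) * phiP a b (J+1-s)
            + C (gco n b J s * (lamv a b (J+1-s) - A)) * phiP a b (J-s)) := by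
    rw [SP, Finset.mul_sum]
    apply Finset.sum_congr rfl
    intro s hs
    have hsJ : s ≤ J := by
      have := Finset.mem_range.mp hs; omega
    have h1 : J - s + 1 = J + 1 - s := by omega
    have := X_sq_mul_phiP a b (J - s)
    rw [h1] at this
    calc (X^2 - C A) * (C (gco n b J s) * phiP a b (J-s))
        = C (gco n b J s) * (X^2 * phiP a b (J-s)) - C A * (C (gco n b J s) * phiP a b (J-s)) := by
          ring
      _ = C (gco n b J s) * (phiP a b (J+1-s) + C (lamv a b (J+1-s)) * phiP a b (J-s))
            - C A * (C (gco n b J s) * phiP a b (J-s)) := by rw [this]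
      _ = C (gco n b J s) * phiP a b (J+1-s)
            + C (gco n b J s * (lamv a b (J+1-s) - A)) * phiP a b (J-s) := by
          rw [C_mul, C_sub]; ring
  -- step 2
  have step2 : (∑ s ∈ Finset.range (J+1),
          C (if s = 0 then (0:ℝ) else B * gco n b (J-1) (s-1)) * phiP a b (J-s))
      = C B * SP n a b (J-1) := by
    rw [Finset.sum_range_succ'
      (fun s => C (if s = 0 then (0:ℝ) else B * gco n b (J-1) (s-1)) * phiP a b (J - s)) J,
      SP, show J - 1 + 1 = J from by omega, Finset.mul_sum]
    have h0 : C (if (0:ℕ) = 0 then (0:ℝ) else B * gco n b (J-1) (0-1)) * phiP a b (J - 0)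
        = 0 := by simp
    rw [h0, add_zero]
    apply Finset.sum_congr rfl
    intro s _
    have h1 : (if s + 1 = 0 then (0:ℝ) else B * gco n b (J-1) (s+1-1)) = B * gco n b (J-1) s := by
      simp
    rw [h1, show J - (s+1) = J - 1 - s from by omega, C_mul, mul_assoc]
  -- step 3 : reorganize
  rw [step1, ← step2, ← Finset.sum_sub_distrib]
  rw [SP, Finset.sum_range_succ' (fun s => C (gco n b (J+1) s) * phiP a b (J+1-s)) (J+1)]
  have lhs_eq : ∑ s ∈ Finset.range (J+1), C (gco n b (J+1) (s+1)) * phiP a b (J+1-(s+1))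
        + C (gco n b (J+1) 0) * phiP a b (J+1-0)
      = ∑ s ∈ Finset.range (J+1), C (gco n b (J+1) (s+1)) * phiP a b (J-s)
        + C 1 * phiP a b (J+1) := by
    rw [gco_zero]
    congr 1
    apply Finset.sum_congr rfl
    intro s _
    rw [show J + 1 - (s+1) = J - s from by omega]
  rw [lhs_eq]
  -- split first piece of RHS sum
  have rhs_eq : ∑ s ∈ Finset.range (J+1),
        (C (gco n b J s) * phiP a b (J+1-s)
          + C (gco n b J s * (lamv a b (J+1-s) - A)) * phiP a b (J-s)
          - C (if s = 0 then 0 else B * gco n b (J-1) (s-1)) * phiP a b (J-s))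
      = ∑ s ∈ Finset.range (J+1),
          (C (gco n b J (s+1)) * phiP a b (J-s)
            + C (gco n b J s * (lamv a b (J+1-s) - A)) * phiP a b (J-s)
            - C (if s = 0 then 0 else B * gco n b (J-1) (s-1)) * phiP a b (J-s))
        + C 1 * phiP a b (J+1) := by
    rw [Finset.sum_sub_distrib, Finset.sum_add_distrib, Finset.sum_sub_distrib,
      Finset.sum_add_distrib]
    have e1 : ∑ s ∈ Finset.range (J+1), C (gco n b J s) * phiP a b (J+1-s)
        = ∑ s ∈ Finset.range (J+1), C (gco n b J (s+1)) * phiP a b (J-s)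
          + C 1 * phiP a b (J+1) := by
      rw [Finset.sum_range_succ' (fun s => C (gco n b J s) * phiP a b (J+1-s)) J]
      rw [Finset.sum_range_succ (fun s => C (gco n b J (s+1)) * phiP a b (J-s)) J]
      rw [gco_vanish n b J (J+1) (by omega), gco_zero]
      simp only [map_zero, zero_mul, add_zero, Nat.sub_zero]
      congr 1
      apply Finset.sum_congr rfl
      intro s _
      rw [show J + 1 - (s+1) = J - s from by omega]
    rw [e1]
    ring
  rw [rhs_eq]
  congr 1
  apply Finset.sum_congr rfl
  intro s hs
  have hsJ : s ≤ J := by have := Finset.mem_range.mp hs; omega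
  have key := gco_id n a b J s hJ hsJ
  rw [← hA, ← hB] at key
  calc C (gco n b (J+1) (s+1)) * phiP a b (J-s)
      = (C (gco n b J (s+1)) + C (gco n b J s * (lamv a b (J+1-s) - A))
          - C (if s = 0 then 0 else B * gco n b (J-1) (s-1))) * phiP a b (J-s) := by
        congr 1
        rw [← C_add, ← C_sub]
        congr 1
        rw [key]
        by_cases h0 : s = 0 <;> simp [h0] <;> ring
    _ = _ := by ring

open Polynomial Finset

theorem cval_even (n k : ℕ) (hn : n % 2 = 0) (hk : k % 2 = 0) (hkn : k ≤ n) (a b : ℝ) :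
    ssup a k * ssub n b k = ((k:ℝ)+1+a) * ((n:ℝ)-(k:ℝ)) := by
  have h1 : ¬ ((k+1) % 2 = 0) := by omega
  have h2 : (n-k) % 2 = 0 := by omega
  rw [ssup, ssub, if_neg h1, if_pos h2, Nat.cast_sub hkn]

theorem cval_odd (n k : ℕ) (hn : n % 2 = 0) (hk : k % 2 = 1) (hkn : k ≤ n) (a b : ℝ) :
    ssup a k * ssub n b k = ((k:ℝ)+1) * ((n:ℝ)-(k:ℝ)+b) := by
  have h1 : (k+1) % 2 = 0 := by omega
  have h2 : ¬ ((n-k) % 2 = 0) := by omega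
  rw [ssup, ssub, if_pos h1, if_neg h2, Nat.cast_sub hkn]

theorem FF_closed (m : ℕ) (a b : ℝ) : ∀ j, j ≤ m → FF (2*m) a b (2*m - 2*j) = X * SP (2*m) a b j := by
  intro j
  induction j using Nat.strong_induction_on with
  | _ j ih =>
  intro hj
  match j, ih with
  | 0, _ =>
    rw [show 2*m - 2*0 = 2*m from by omega, FF_last]
    simp [SP, Finset.sum_range_one, gco_zero, phiP]
  | 1, _ =>
    have hm : 1 ≤ m := hj
    have e1 := FF_rec (2*m) a b (2*m-2) (by omega)
    have e2 := FF_rec (2*m) a b (2*m-1) (by omega)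
    rw [show 2*m-2+1 = 2*m-1 from by omega, show 2*m-2+2 = 2*m from by omega] at e1
    rw [show 2*m-1+1 = 2*m from by omega, show 2*m-1+2 = 2*m+1 from by omega,
      FF_last, FF_zero_size] at e2
    have hc1 : ssup a (2*m-1) * ssub (2*m) b (2*m-1) = (2*(m:ℝ))*(1+b) := by
      rw [cval_odd (2*m) (2*m-1) (by omega) (by omega) (by omega) a b,
        Nat.cast_sub (show 1 ≤ 2*m by omega)]
      push_cast
      ring
    have hc0 : ssup a (2*m-2) * ssub (2*m) b (2*m-2) = (2*(m:ℝ)-1+a)*2 := by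
      rw [cval_even (2*m) (2*m-2) (by omega) (by omega) (by omega) a b,
        Nat.cast_sub (show 2 ≤ 2*m by omega)]
      push_cast
      ring
    rw [show 2*m - 2*1 = 2*m-2 from by omega, e1, e2, FF_last, hc1, hc0]
    have hSP : SP (2*m) a b 1 = C (gco (2*m) b 1 0) * phiP a b 1 + C (gco (2*m) b 1 1) * phiP a b 0 := by
      rw [SP, Finset.sum_range_succ, Finset.sum_range_one]
    rw [hSP, gco_zero, C_1, phiP, phiP, Finset.prod_range_one, Finset.prod_range_zero]
    have key : lamv a b (0+1) = (2*(m:ℝ))*(1+b) + (2*(m:ℝ)-1+a)*2 + gco (2*m) b 1 1 := by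
      rw [lamv, gco]
      simp only [fallR, rhoR, betaR, Finset.prod_range_one, Nat.factorial_one]
      push_cast
      ring
    rw [key, C_add, C_add]
    ring
  | (J+2), ih =>
    have hJm : J + 2 ≤ m := hj
    set p := 2*m - 2*J with hp
    have hp4 : 4 ≤ p := by omega
    have e1 := FF_rec (2*m) a b (p-4) (by omega)
    have e2 := FF_rec (2*m) a b (p-3) (by omega)
    have e3 := FF_rec (2*m) a b (p-2) (by omega)
    rw [show p-4+1 = p-3 from by omega, show p-4+2 = p-2 from by omega] at e1
    rw [show p-3+1 = p-2 from by omega, show p-3+2 = p-1 from by omega] at e2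
    rw [show p-2+1 = p-1 from by omega, show p-2+2 = p from by omega] at e3
    set q1 := ssup a (p-4) * ssub (2*m) b (p-4) with hq1d
    set q2 := ssup a (p-3) * ssub (2*m) b (p-3) with hq2d
    set q3 := ssup a (p-2) * ssub (2*m) b (p-2) with hq3d
    -- skip recurrence
    have skip : FF (2*m) a b (p-4) =
        (X^2 - (C q2 + C q1)) * FF (2*m) a b (p-2)
        - C q2 * C q3 * FF (2*m) a b p := by
      linear_combination e1 + X * e2 + C q2 * e3
    have hA : q2 + q1
        = (((2*m:ℕ):ℝ) - 2*((J+1:ℕ):ℝ)) * (2*((J+1:ℕ):ℝ)+1+b)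
          + (2*((J+1:ℕ):ℝ)+2) * (((2*m:ℕ):ℝ) - 2*((J+1:ℕ):ℝ) - 1 + a) := by
      rw [hq2d, hq1d, cval_odd (2*m) (p-3) (by omega) (by omega) (by omega) a b,
        cval_even (2*m) (p-4) (by omega) (by omega) (by omega) a b,
        show p-3 = 2*m - (2*J+3) from by omega, show p-4 = 2*m - (2*J+4) from by omega,
        Nat.cast_sub (show 2*J+3 ≤ 2*m by omega), Nat.cast_sub (show 2*J+4 ≤ 2*m by omega)]
      push_cast
      ring
    have hB : q2 * q3
        = (((2*m:ℕ):ℝ) - 2*((J+1:ℕ):ℝ)) * (2*((J+1:ℕ):ℝ)+1+b) * (2*((J+1:ℕ):ℝ))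
          * (((2*m:ℕ):ℝ) - 2*((J+1:ℕ):ℝ) + 1 + a) := by
      rw [hq2d, hq3d, cval_odd (2*m) (p-3) (by omega) (by omega) (by omega) a b,
        cval_even (2*m) (p-2) (by omega) (by omega) (by omega) a b,
        show p-3 = 2*m - (2*J+3) from by omega, show p-2 = 2*m - (2*J+2) from by omega,
        Nat.cast_sub (show 2*J+3 ≤ 2*m by omega), Nat.cast_sub (show 2*J+2 ≤ 2*m by omega)]
      push_cast
      ring
    rw [show 2*m - 2*(J+2) = p-4 from by omega, skip, ← C_add, hA, ← C_mul, hB,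
      show p-2 = 2*m - 2*(J+1) from by omega, ih (J+1) (by omega) (by omega),
      hp, ih J (by omega) (by omega),
      show J+2 = (J+1)+1 from rfl, SP_rec (2*m) a b (J+1) (by omega),
      Nat.add_sub_cancel]
    ring

theorem SP_top (m : ℕ) (a b : ℝ) : SP (2*m) a b m = phiP a b m := by
  rw [SP, Finset.sum_range_succ'
    (fun s => C (gco (2*m) b m s) * phiP a b (m - s)) m]
  have h1 : ∑ s ∈ Finset.range m, C (gco (2*m) b m (s+1)) * phiP a b (m - (s+1)) = 0 := by
    apply Finset.sum_eq_zero
    intro s _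
    rw [gco_top, map_zero, zero_mul]
  rw [h1, gco_zero, zero_add, Nat.sub_zero, C_1, one_mul]

theorem charpoly_eq (m : ℕ) (a b : ℝ) :
    (Hmat (2*m) a b).charpoly = X * phiP a b m := by
  rw [charpoly_Hmat]
  have h := FF_closed m a b m le_rfl
  rw [show 2*m - 2*m = 0 from by omega] at h
  rw [h, SP_top]

open Polynomial Finset

theorem lamv_pos (a b : ℝ) (hab : -2 < a + b) (k : ℕ) (hk : 1 ≤ k) : 0 < lamv a b k := by
  rw [lamv]
  have hk' : (1:ℝ) ≤ (k:ℝ) := by exact_mod_cast hk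
  nlinarith

theorem lamv_mono (a b : ℝ) (hab : -2 < a + b) (k l : ℕ) (hk : 1 ≤ k) (hkl : k < l) :
    lamv a b k < lamv a b l := by
  rw [lamv, lamv]
  have hk' : (1:ℝ) ≤ (k:ℝ) := by exact_mod_cast hk
  have hkl' : (k:ℝ) + 1 ≤ (l:ℝ) := by exact_mod_cast hkl
  nlinarith

noncomputable def frt (m : ℕ) (a b : ℝ) (i : ℕ) : ℝ :=
  if i < m then -Real.sqrt (lamv a b (m - i))
  else if i = m then 0
  else Real.sqrt (lamv a b (i - m))

theorem frt_mono (m : ℕ) (a b : ℝ) (hab : -2 < a + b) (i j : ℕ) (hij : i < j) (hj : j ≤ 2*m) :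
    frt m a b i < frt m a b j := by
  have hsq : ∀ k, 1 ≤ k → 0 < Real.sqrt (lamv a b k) := fun k hk =>
    Real.sqrt_pos.mpr (lamv_pos a b hab k hk)
  have hsqm : ∀ k l, 1 ≤ k → k < l → Real.sqrt (lamv a b k) < Real.sqrt (lamv a b l) :=
    fun k l hk hkl => Real.sqrt_lt_sqrt (lamv_pos a b hab k hk).le (lamv_mono a b hab k l hk hkl)
  rw [frt, frt]
  by_cases h1 : i < m
  · rw [if_pos h1]
    by_cases h2 : j < m
    · rw [if_pos h2]
      have := hsqm (m - j) (m - i) (by omega) (by omega)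
      linarith
    · by_cases h3 : j = m
      · rw [if_neg h2, if_pos h3]
        have := hsq (m - i) (by omega)
        linarith
      · rw [if_neg h2, if_neg h3]
        have u1 := hsq (m - i) (by omega)
        have u2 := hsq (j - m) (by omega)
        linarith
  · by_cases h3 : i = m
    · rw [if_neg h1, if_pos h3]
      have h2 : ¬ (j < m) := by omega
      have h4 : ¬ (j = m) := by omega
      rw [if_neg h2, if_neg h4]
      exact hsq (j - m) (by omega)
    · rw [if_neg h1, if_neg h3]
      have h2 : ¬ (j < m) := by omega
      have h4 : ¬ (j = m) := by omega
      rw [if_neg h2, if_neg h4]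
      exact hsqm (i - m) (j - m) (by omega) (by omega)

theorem frt_root (m : ℕ) (a b : ℝ) (hab : -2 < a + b) (i : ℕ) (hi : i ≤ 2*m) :
    (X * phiP a b m).IsRoot (frt m a b i) := by
  rw [Polynomial.IsRoot, eval_mul, eval_X]
  by_cases h3 : i = m
  · rw [frt, if_neg (by omega), if_pos h3]
    ring
  · -- (frt i)^2 = lamv k for k = (if i < m then m - i else i - m)
    set k := if i < m then m - i else i - m with hk
    have hk1 : 1 ≤ k := by rw [hk]; split_ifs <;> omega
    have hkm : k ≤ m := by rw [hk]; split_ifs <;> omega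
    have hsq : (frt m a b i)^2 = lamv a b k := by
      rw [frt, hk]
      by_cases h1 : i < m
      · rw [if_pos h1, if_pos h1, neg_pow]
        simp [Real.sq_sqrt (lamv_pos a b hab (m-i) (by omega)).le]
      · rw [if_neg h1, if_neg h1, if_neg h3]
        exact Real.sq_sqrt (lamv_pos a b hab (i-m) (by omega)).le
    have : eval (frt m a b i) (phiP a b m) = 0 := by
      rw [phiP, eval_prod]
      apply Finset.prod_eq_zero (Finset.mem_range.mpr (show k - 1 < m by omega))
      rw [eval_sub, eval_pow, eval_X, eval_C, show k - 1 + 1 = k from by omega, hsq, sub_self]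
    rw [this, mul_zero]

open Polynomial Finset

theorem final_count (m : ℕ) (a b : ℝ) (hab : -2 < a + b) :
    (Hmat (2*m) a b).charpoly.roots.toFinset.card = 2*m+1 := by
  have hp := charpoly_eq m a b
  have hne : (Hmat (2*m) a b).charpoly ≠ 0 := (Matrix.charpoly_monic _).ne_zero
  have hinj : Set.InjOn (frt m a b) ((Finset.range (2*m+1)) : Set ℕ) := by
    intro x hx y hy hxy
    simp only [Finset.coe_range, Set.mem_Iio] at hx hy
    rcases lt_trichotomy x y with h | h | h
    · exact absurd hxy (ne_of_lt (frt_mono m a b hab x y h (by omega)))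
    · exact h
    · exact absurd hxy.symm (ne_of_lt (frt_mono m a b hab y x h (by omega)))
  have hsub : (Finset.range (2*m+1)).image (frt m a b)
      ⊆ (Hmat (2*m) a b).charpoly.roots.toFinset := by
    intro x hx
    rw [Finset.mem_image] at hx
    obtain ⟨i, hi, rfl⟩ := hx
    rw [Multiset.mem_toFinset, hp, Polynomial.mem_roots (hp ▸ hne)]
    exact frt_root m a b hab i (Nat.lt_succ_iff.mp (Finset.mem_range.mp hi))
  have hlow : 2*m+1 ≤ (Hmat (2*m) a b).charpoly.roots.toFinset.card := by
    calc 2*m+1 = ((Finset.range (2*m+1)).image (frt m a b)).card := by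
          rw [Finset.card_image_of_injOn hinj, Finset.card_range]
      _ ≤ _ := Finset.card_le_card hsub
  have hhigh : (Hmat (2*m) a b).charpoly.roots.toFinset.card ≤ 2*m+1 := by
    calc (Hmat (2*m) a b).charpoly.roots.toFinset.card
        ≤ Multiset.card (Hmat (2*m) a b).charpoly.roots := Multiset.toFinset_card_le _
      _ ≤ (Hmat (2*m) a b).charpoly.natDegree := Polynomial.card_roots' _
      _ = 2*m+1 := by rw [Matrix.charpoly_natDegree_eq_dim, Fintype.card_fin]
  omega

/-- for `n = 2m` even and `a + b > -2`, the matrix `H_n(a,b)` has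
`n + 1` distinct real eigenvalues (its characteristic polynomial, of degree
`n + 1`, has `n + 1` distinct real roots). -/
theorem Hmat_even_distinct_real_eigenvalues (m : ℕ) (a b : ℝ) (hab : -2 < a + b) :
    (Hmat (2 * m) a b).charpoly.roots.toFinset.card = 2 * m + 1 := by
  exact final_count m a b hab
end

section
/- For n = 2m+1 odd with a > -1 and b > -1, all eigenvalues of H_n(a,b) are real and distinct, and the spectrum is symmetric about 0 (λ is an eigenvalue iff -λ is). -/
/-!
A real tridiagonal matrix whose off-diagonal entries are positive is conjugate, by a positive
diagonal matrix, to a symmetric tridiagonal matrix with positive off-diagonal entries. The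
eigenvalues are therefore real, and they are simple: the eigenvector equations form a three-term
recurrence, so an eigenvector is determined by its first coordinate, and two orthonormal
eigenvectors for one eigenvalue would have a nonzero combination with vanishing first coordinate.
When the diagonal vanishes, conjugation by `diag((-1)^i)` sends the matrix to its negative, so the
spectrum is symmetric about `0`.
-/

namespace Matrix

def tridiagonal {R : Type*} [Zero R] {N : ℕ} (d u l : ℕ → R) : Matrix (Fin N) (Fin N) R :=
  of fun i j =>
    if (i : ℕ) + 1 = j then u i else if (j : ℕ) + 1 = i then l j else if i = j then d i else 0

section Tridiagonal

variable {R : Type*} [Zero R] {N : ℕ} (d u l : ℕ → R)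

theorem tridiagonal_apply_of_add_one_eq {i j : Fin N} (h : (i : ℕ) + 1 = j) :
    tridiagonal d u l i j = u i :=
  if_pos h

theorem tridiagonal_apply_of_add_one_lt {i j : Fin N} (h : (i : ℕ) + 1 < j) :
    tridiagonal d u l i j = 0 := by
  simp only [tridiagonal, of_apply]
  split_ifs <;> first | rfl | omega

theorem tridiagonal_zero_apply_of_even {i j : Fin N} (h : Even ((i : ℕ) + j)) :
    tridiagonal 0 u l i j = 0 := by
  simp only [tridiagonal, of_apply, Pi.zero_apply, ite_self]
  split_ifs <;> first | rfl | (exfalso; rcases h with ⟨r, hr⟩; omega)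

theorem transpose_tridiagonal :
    (tridiagonal d u l : Matrix (Fin N) (Fin N) R)ᵀ = tridiagonal d l u := by
  ext i j
  simp only [tridiagonal, transpose_apply, of_apply]
  split_ifs <;> first | rfl | omega | (subst_vars; rfl)

end Tridiagonal

theorem eq_zero_of_mulVec_eq_smul_of_apply_zero_eq_zero {R : Type*} [Ring R] [NoZeroDivisors R]
    {n : ℕ} {A : Matrix (Fin (n + 1)) (Fin (n + 1)) R}
    (hA : ∀ i j : Fin (n + 1), (i : ℕ) + 1 < j → A i j = 0)
    (hA' : ∀ i j : Fin (n + 1), (i : ℕ) + 1 = j → A i j ≠ 0)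
    {x : Fin (n + 1) → R} {c : R} (hx : A *ᵥ x = c • x) (h0 : x 0 = 0) : x = 0 := by
  suffices h : ∀ k : ℕ, ∀ i : Fin (n + 1), (i : ℕ) ≤ k → x i = 0 from
    funext fun i => h i i le_rfl
  intro k
  induction k with
  | zero => intro i hi; rwa [show i = 0 from Fin.ext (by rw [Fin.val_zero]; omega)]
  | succ k ih =>
    intro i hi
    rcases Nat.lt_or_eq_of_le hi with hi | hi
    · exact ih i (by omega)
    let r : Fin (n + 1) := ⟨k, by omega⟩
    -- row `r` of the eigenvector equation involves only `x 0, …, x (k + 1)`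
    have hrow : (A *ᵥ x) r = A r i * x i := by
      refine Finset.sum_eq_single i (fun q _ hq => ?_) (absurd (Finset.mem_univ i))
      rcases le_or_gt (q : ℕ) k with hq' | hq'
      · exact mul_eq_zero_of_right _ (ih q hq')
      · have hqi : (q : ℕ) ≠ i := Fin.val_ne_iff.mpr hq
        exact mul_eq_zero_of_left (hA r q (by change k + 1 < (q : ℕ); omega)) _
    have : A r i * x i = 0 := by rw [← hrow, hx, Pi.smul_apply, ih r le_rfl, smul_zero]
    exact (mul_eq_zero.mp this).resolve_left (hA' r i (by change k + 1 = (i : ℕ); omega))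

theorem IsHermitian.eigenvalues_injective_of_eq_zero_of_apply_eq_zero {𝕜 : Type*} [RCLike 𝕜]
    {n : Type*} [Fintype n] [DecidableEq n] {A : Matrix n n 𝕜} (hA : A.IsHermitian) (i₀ : n)
    (h : ∀ (x : n → 𝕜) (c : ℝ), A *ᵥ x = c • x → x i₀ = 0 → x = 0) :
    Function.Injective hA.eigenvalues := by
  intro i j hij
  by_contra hne
  set v := hA.eigenvectorBasis
  have hv : ∀ k, A *ᵥ ⇑(v k) = hA.eigenvalues k • ⇑(v k) := hA.mulVec_eigenvectorBasis
  have hv0 : ∀ k, v k i₀ ≠ 0 := fun k h0 =>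
    v.toBasis.ne_zero k (by simpa using (WithLp.ofLp_eq_zero 2).mp (h _ _ (hv k) h0))
  have hcomb : v j i₀ • v i + (-v i i₀) • v j = 0 := by
    refine (WithLp.ofLp_eq_zero 2).mp (h _ (hA.eigenvalues i) ?_ ?_)
    · simp only [WithLp.ofLp_add, WithLp.ofLp_smul, mulVec_add, mulVec_smul, hv, hij]
      module
    · simp only [WithLp.ofLp_add, WithLp.ofLp_smul, Pi.add_apply, Pi.smul_apply, smul_eq_mul]
      ring
  have hli : LinearIndependent 𝕜 ![v i, v j] := by
    have hinj : Function.Injective ![i, j] := by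
      intro a b hab; fin_cases a <;> fin_cases b <;> simp_all [eq_comm]
    convert v.orthonormal.linearIndependent.comp _ hinj using 1
    · ext k; fin_cases k <;> rfl
    · rfl
  exact hv0 j (hli.eq_zero_of_pair hcomb).1

theorem IsHermitian.card_toFinset_roots_charpoly {𝕜 : Type*} [RCLike 𝕜]
    {n : Type*} [Fintype n] [DecidableEq n] {A : Matrix n n 𝕜} (hA : A.IsHermitian)
    (hinj : Function.Injective hA.eigenvalues) :
    A.charpoly.roots.toFinset.card = Fintype.card n := by
  rw [hA.roots_charpoly_eq_eigenvalues, Multiset.toFinset_map, Finset.val_toFinset,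
    Finset.card_image_of_injective _ (RCLike.ofReal_injective.comp hinj), Finset.card_univ]

theorem charpoly_eq_of_mul_eq_mul {R : Type*} [CommRing R] {n : Type*} [Fintype n]
    [DecidableEq n] {P A B : Matrix n n R} (hP : IsUnit P) (h : P * A = B * P) :
    A.charpoly = B.charpoly := by
  obtain ⟨U, rfl⟩ := hP
  have hA : A = U⁻¹.val * (B * U.val) := by rw [← h, ← mul_assoc, Units.inv_mul, one_mul]
  rw [hA, charpoly_mul_comm, mul_assoc, Units.mul_inv, mul_one]

noncomputable def symmetrizer (u l : ℕ → ℝ) : ℕ → ℝ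
  | 0 => 1
  | k + 1 => symmetrizer u l k * √(u k / l k)

section Symmetrize

variable {n : ℕ} {u l : ℕ → ℝ}

theorem symmetrizer_pos (hu : ∀ k < n, 0 < u k) (hl : ∀ k < n, 0 < l k) :
    ∀ k ≤ n, 0 < symmetrizer u l k
  | 0, _ => one_pos
  | k + 1, hk => mul_pos (symmetrizer_pos hu hl k (by omega))
      (Real.sqrt_pos.mpr (div_pos (hu k hk) (hl k hk)))

theorem diagonal_symmetrizer_mul_tridiagonal (hu : ∀ k < n, 0 < u k) (hl : ∀ k < n, 0 < l k)
    (d : ℕ → ℝ) :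
    diagonal (fun i : Fin (n + 1) => symmetrizer u l i) * tridiagonal d u l =
      tridiagonal d (fun k => √(u k * l k)) (fun k => √(u k * l k)) *
        diagonal (fun i : Fin (n + 1) => symmetrizer u l i) := by
  ext i j
  rw [diagonal_mul, mul_diagonal]
  simp only [tridiagonal, of_apply]
  split_ifs with hij hji hd
  · have hk : (i : ℕ) < n := by omega
    have : √(u i * l i) * √(u i / l i) = u i := by
      rw [← Real.sqrt_mul (mul_pos (hu i hk) (hl i hk)).le,
        show u i * l i * (u i / l i) = u i * u i by field_simp [(hl i hk).ne'],
        Real.sqrt_mul_self (hu i hk).le]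
    rw [← hij, symmetrizer, mul_left_comm, this]
  · have hk : (j : ℕ) < n := by omega
    have : √(u j / l j) * l j = √(u j * l j) := calc
      √(u j / l j) * l j = √(u j / l j) * √(l j * l j) := by
        rw [Real.sqrt_mul_self (hl j hk).le]
      _ = √(u j * l j) := by
        rw [← Real.sqrt_mul (div_pos (hu j hk) (hl j hk)).le]
        congr 1
        field_simp [(hl j hk).ne']
    rw [← hji, symmetrizer, mul_assoc, this, mul_comm]
  · rw [hd, mul_comm]
  · rw [mul_zero, zero_mul]

theorem charpoly_tridiagonal_eq_symmetric (hu : ∀ k < n, 0 < u k) (hl : ∀ k < n, 0 < l k)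
    (d : ℕ → ℝ) :
    (tridiagonal d u l : Matrix (Fin (n + 1)) (Fin (n + 1)) ℝ).charpoly =
      (tridiagonal d (fun k => √(u k * l k)) (fun k => √(u k * l k)) :
        Matrix (Fin (n + 1)) (Fin (n + 1)) ℝ).charpoly :=
  charpoly_eq_of_mul_eq_mul
    (isUnit_diagonal.mpr <| Pi.isUnit_iff.mpr fun i =>
      (symmetrizer_pos hu hl i (Nat.lt_succ_iff.mp i.isLt)).ne'.isUnit)
    (diagonal_symmetrizer_mul_tridiagonal hu hl d)

theorem card_toFinset_roots_charpoly_tridiagonal (hu : ∀ k < n, 0 < u k)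
    (hl : ∀ k < n, 0 < l k) (d : ℕ → ℝ) :
    (tridiagonal d u l : Matrix (Fin (n + 1)) (Fin (n + 1)) ℝ).charpoly.roots.toFinset.card =
      n + 1 := by
  set s : ℕ → ℝ := fun k => √(u k * l k)
  have hs : (tridiagonal d s s : Matrix (Fin (n + 1)) (Fin (n + 1)) ℝ).IsHermitian := by
    rw [IsHermitian, conjTranspose_eq_transpose_of_trivial, transpose_tridiagonal]
  have hsimple : ∀ (x : Fin (n + 1) → ℝ) (c : ℝ),
      tridiagonal d s s *ᵥ x = c • x → x 0 = 0 → x = 0 := fun x c hx h0 =>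
    eq_zero_of_mulVec_eq_smul_of_apply_zero_eq_zero
      (fun _ _ => tridiagonal_apply_of_add_one_lt d s s)
      (fun i j hij => by
        rw [tridiagonal_apply_of_add_one_eq d s s hij]
        exact (Real.sqrt_pos.mpr (mul_pos (hu i (by omega)) (hl i (by omega)))).ne')
      hx h0
  rw [charpoly_tridiagonal_eq_symmetric hu hl, hs.card_toFinset_roots_charpoly
    (hs.eigenvalues_injective_of_eq_zero_of_apply_eq_zero 0 hsimple), Fintype.card_fin]

end Symmetrize

theorem diagonal_neg_one_pow_mul_mul_diagonal_neg_one_pow {R : Type*} [Ring R] {N : ℕ}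
    {A : Matrix (Fin N) (Fin N) R} (hA : ∀ i j : Fin N, Even ((i : ℕ) + j) → A i j = 0) :
    diagonal (fun i : Fin N => (-1 : R) ^ (i : ℕ)) * A *
      diagonal (fun i : Fin N => (-1 : R) ^ (i : ℕ)) = -A := by
  ext i j
  rw [mul_diagonal, diagonal_mul, neg_apply]
  rcases Nat.even_or_odd ((i : ℕ) + j) with h | h
  · simp [hA i j h]
  · rw [mul_assoc, ← ((Commute.neg_one_left (A i j)).pow_left _).eq, ← mul_assoc, ← pow_add,
      h.neg_one_pow, neg_one_mul]

theorem spectrum_neg_eq_of_even_add {R : Type*} [Field R] {N : ℕ}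
    {A : Matrix (Fin N) (Fin N) R} (hA : ∀ i j : Fin N, Even ((i : ℕ) + j) → A i j = 0) :
    spectrum R (-A) = spectrum R A := by
  have hE : diagonal (fun i : Fin N => (-1 : R) ^ (i : ℕ)) *
      diagonal (fun i : Fin N => (-1 : R) ^ (i : ℕ)) = 1 := by
    rw [diagonal_mul_diagonal, ← diagonal_one]
    simp [← pow_add, ← two_mul, pow_mul]
  rw [← diagonal_neg_one_pow_mul_mul_diagonal_neg_one_pow hA]
  exact spectrum.units_conjugate (u := ⟨_, _, hE, hE⟩)

end Matrix

open Matrix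

theorem Hmat_eq_tridiagonal (n : ℕ) (a b : ℝ) :
    Hmat n a b = tridiagonal 0 (fun k => if (k + 1) % 2 = 0 then (k + 1 : ℝ) else k + 1 + a)
      (fun k => if (n - k) % 2 = 0 then ((n - k : ℕ) : ℝ) else ((n - k : ℕ) : ℝ) + b) := by
  ext i j
  simp only [Hmat, tridiagonal, of_apply, Pi.zero_apply, ite_self]

/-- for `n = 2m+1` odd with `a > -1` and `b > -1`, all eigenvalues of
`H_n(a,b)` are real and distinct (its real characteristic polynomial, of degree
`n + 1`, has `n + 1` distinct real roots), and the spectrum is symmetric about `0`. -/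
theorem Hmat_odd_distinct_real_symmetric_spectrum (m : ℕ) (a b : ℝ)
    (ha : -1 < a) (hb : -1 < b) :
    (Hmat (2 * m + 1) a b).charpoly.roots.toFinset.card = 2 * m + 2 ∧
      ∀ x : ℝ, x ∈ spectrum ℝ (Hmat (2 * m + 1) a b)
        ↔ -x ∈ spectrum ℝ (Hmat (2 * m + 1) a b) := by
  rw [Hmat_eq_tridiagonal]
  refine ⟨card_toFinset_roots_charpoly_tridiagonal (fun k _ => ?_) (fun k hk => ?_) 0,
    fun x => ?_⟩
  · split_ifs <;> linarith [(k.cast_nonneg : (0 : ℝ) ≤ k)]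
  · have : (1 : ℝ) ≤ ((2 * m + 1 - k : ℕ) : ℝ) := by
      exact_mod_cast (by omega : 1 ≤ 2 * m + 1 - k)
    split_ifs <;> linarith
  · rw [← Set.neg_mem_neg, spectrum.neg_eq,
      spectrum_neg_eq_of_even_add fun i j => tridiagonal_zero_apply_of_even _ _]
end
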